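/- arXiv:math/0509343 — 7 statements merged into one kernel-verified Lean document; each statement's English description precedes it below -/
import Mathlib

section
/- Let n be a positive integer and m an integer with m ∉ nℤ, and let p, q be coprime integers with p > 0 and q/p = m/n (so p ≥ 2 and q ≠ 0). Then for every θ ∈ ℝ and every k ≥ 1, the k-fold forward image set r^k((d^k)^{-1}(e^{2πiθ})) equals { e^{2πi(θq^k + j)/p^k} : j = 0, 1, …, p^k − 1 }, where d(z) = z^n and r(z) = z^m on the circle 𝕋. -/
/-!
Write `e(x) = exp(2πix)`. A point `z` with `z ^ n = e((a + j) / P)` is `e(x)` with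
`n x = (a + j) / P + c`, and then `z ^ m = e(m x) = e(q (a + j + c P) / (p P))` because `m / n = q / p`.
So the correspondence `r ∘ d⁻¹` sends the `P`-th roots of `e(a)` onto those `e((q a + J) / (p P))` with
`J ∈ qℤ + pPℤ`, which are all the `pP`-th roots of `e(q a)` as soon as `q` is prime to `pP`.
Starting from `P = 1` and iterating gives `P = p ^ k`.
-/

open Real

namespace Circle

lemma exp_two_pi_mul_pow (x : ℝ) (n : ℕ) : exp (2 * π * x) ^ n = exp (2 * π * (n * x)) := by
  rw [← exp_natCast_mul, mul_left_comm]

lemma exp_two_pi_mul_zpow (x : ℝ) (m : ℤ) : exp (2 * π * x) ^ m = exp (2 * π * (m * x)) := by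
  rw [← exp_intCast_mul, mul_left_comm]

lemma exp_two_pi_mul_eq_iff {x y : ℝ} : exp (2 * π * x) = exp (2 * π * y) ↔ ∃ c : ℤ, x = y + c := by
  rw [exp_eq_exp]
  refine exists_congr fun c => ?_
  constructor <;> intro h
  · nlinarith [pi_pos]
  · rw [h]; ring

lemma exp_two_pi_mul_add_intCast (x : ℝ) (c : ℤ) : exp (2 * π * (x + c)) = exp (2 * π * x) :=
  exp_two_pi_mul_eq_iff.mpr ⟨c, rfl⟩

lemma exists_exp_two_pi_mul_eq (z : Circle) : ∃ x : ℝ, exp (2 * π * x) = z := by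
  obtain ⟨ψ, rfl⟩ := exp_surjective z
  exact ⟨ψ / (2 * π), by rw [mul_div_cancel₀ _ (by positivity)]⟩

end Circle

theorem image_zpow_preimage_pow_range_exp {n : ℕ} {m p q P : ℤ} (hn : n ≠ 0) (hp : p ≠ 0)
    (hP : P ≠ 0) (hred : q * n = m * p) (hcop : IsCoprime (P * p) q) (a : ℝ) :
    (fun z : Circle => z ^ m) ''
        ((fun z : Circle => z ^ n) ⁻¹' Set.range fun j : ℤ => Circle.exp (2 * π * ((a + j) / P))) =
      Set.range fun J : ℤ => Circle.exp (2 * π * ((a * q + J) / (P * p))) := by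
  have hn : (n : ℝ) ≠ 0 := Nat.cast_ne_zero.mpr hn
  have hp : (p : ℝ) ≠ 0 := Int.cast_ne_zero.mpr hp
  have hP : (P : ℝ) ≠ 0 := Int.cast_ne_zero.mpr hP
  have hred : (q : ℝ) * n = m * p := by exact_mod_cast hred
  ext w
  constructor
  · rintro ⟨z, ⟨j, hj⟩, rfl⟩
    obtain ⟨x, rfl⟩ := Circle.exists_exp_two_pi_mul_eq z
    obtain ⟨c, hc⟩ := Circle.exp_two_pi_mul_eq_iff.mp (hj.trans (Circle.exp_two_pi_mul_pow x n))
    rw [div_eq_iff hP] at hc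
    refine ⟨q * (j - c * P), ?_⟩
    dsimp only
    rw [Circle.exp_two_pi_mul_zpow]
    congr 2
    field_simp
    push_cast
    linear_combination (q : ℝ) * hc + (P : ℝ) * x * hred
  · rintro ⟨J, rfl⟩
    obtain ⟨u, v, huv⟩ := hcop
    have huv : (u : ℝ) * (P * p) + v * q = 1 := by exact_mod_cast huv
    refine ⟨Circle.exp (2 * π * ((a + v * J) / (P * n))), ⟨v * J, ?_⟩, ?_⟩
    · dsimp only
      rw [Circle.exp_two_pi_mul_pow]
      congr 2
      push_cast
      field_simp
    · dsimp only
      rw [Circle.exp_two_pi_mul_zpow, Circle.exp_two_pi_mul_eq_iff]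
      refine ⟨-(u * J), ?_⟩
      field_simp
      push_cast
      linear_combination -(a + v * J) * hred + (n : ℝ) * J * huv

lemma range_exp_two_pi_mul_div_eq (a : ℝ) {P : ℤ} (hP : 0 < P) :
    (Set.range fun j : ℤ => Circle.exp (2 * π * ((a + j) / P))) =
      {w : Circle | ∃ j : ℤ, 0 ≤ j ∧ j < P ∧ w = Circle.exp (2 * π * ((a + j) / P))} := by
  have hP' : (P : ℝ) ≠ 0 := Int.cast_ne_zero.mpr hP.ne'
  ext w
  constructor
  · rintro ⟨j, rfl⟩
    refine ⟨j % P, Int.emod_nonneg j hP.ne', Int.emod_lt_of_pos j hP,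
      Circle.exp_two_pi_mul_eq_iff.mpr ⟨j / P, ?_⟩⟩
    have hj : (j : ℝ) = (j % P : ℤ) + P * (j / P : ℤ) := by
      exact_mod_cast (Int.emod_add_mul_ediv j P).symm
    rw [hj]
    field_simp
    ring
  · rintro ⟨j, -, -, rfl⟩
    exact ⟨j, rfl⟩

theorem stmt1_general (n : ℕ) (hn : 0 < n) (m : ℤ)
    (p q : ℤ) (hp : 0 < p) (hpq : IsCoprime p q) (hred : q * n = m * p) (θ : ℝ)
    (k : ℕ) :
    (fun S : Set Circle =>
        (fun z : Circle => z ^ m) '' ((fun z : Circle => z ^ n) ⁻¹' S))^[k]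
        {Circle.exp (2 * π * θ)} =
      {w : Circle | ∃ j : ℤ, 0 ≤ j ∧ j < p ^ k ∧
        w = Circle.exp (2 * π * (θ * q ^ k + j) / p ^ k)} := by
  have iterate_eq : ∀ i : ℕ,
      (fun S : Set Circle =>
        (fun z : Circle => z ^ m) '' ((fun z : Circle => z ^ n) ⁻¹' S))^[i]
        {Circle.exp (2 * π * θ)} =
      Set.range fun j : ℤ => Circle.exp (2 * π * ((θ * q ^ i + j) / (p ^ i : ℤ))) := by
    intro i
    induction i with
    | zero =>
      simp only [Function.iterate_zero, id, pow_zero, mul_one, Int.cast_one, div_one,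
        Circle.exp_two_pi_mul_add_intCast, Set.range_const]
    | succ i ih =>
      rw [Function.iterate_succ_apply', ih, image_zpow_preimage_pow_range_exp hn.ne' hp.ne'
        (pow_ne_zero i hp.ne') hred (pow_succ p i ▸ hpq.pow_left)]
      simp only [pow_succ, Int.cast_mul, mul_assoc]
  rw [iterate_eq, range_exp_two_pi_mul_div_eq _ (pow_pos hp k)]
  simp only [Int.cast_pow, mul_div_assoc]

/-- For `n ≥ 1`, `m ∉ nℤ`, and `p, q` coprime with `p > 0` and `q/p = m/n`,
the `k`-fold forward image set `r^k((d^k)⁻¹(e^{2πiθ}))`, obtained by iterating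
the set-valued map `S ↦ r(d⁻¹(S))` (with `d(z) = z^n`, `r(z) = z^m`) `k` times,
equals `{ e^{2πi(θq^k + j)/p^k} : j = 0, 1, …, p^k − 1 }`. -/
theorem stmt1 (n : ℕ) (hn : 0 < n) (m : ℤ) (hm : ¬ (n : ℤ) ∣ m)
    (p q : ℤ) (hp : 0 < p) (hpq : IsCoprime p q) (hred : q * n = m * p) (θ : ℝ)
    (k : ℕ) (hk : 1 ≤ k) :
    (fun S : Set Circle =>
        (fun z : Circle => z ^ m) '' ((fun z : Circle => z ^ n) ⁻¹' S))^[k]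
        {Circle.exp (2 * π * θ)} =
      {w : Circle | ∃ j : ℤ, 0 ≤ j ∧ j < p ^ k ∧
        w = Circle.exp (2 * π * (θ * q ^ k + j) / p ^ k)} :=
  stmt1_general n hn m p q hp hpq hred θ k
end

section
/- Let E be a directed graph with edge set E¹ and maps n : E¹ → ℤ₊, m : E¹ → ℤ. Define p : (finite paths of E) → ℤ₊ recursively by: p(e) = 1 if m(e) = 0 and p(e) = n(e)/gcd(n(e), |m(e)|) otherwise, for edges e; and for a path μ = (e, ν) with e an edge and ν a path, p(μ) = 1 if m(e) = 0 and p(μ) = n(e)p(ν)/gcd(n(e)p(ν), |m(e)|) otherwise. Then for any composable paths μ ∈ E^k and ν ∈ E^l (k, l ≥ 1, with d(μ) = r(ν)), p(μ) divides p((μ,ν)). -/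
/-- The contraction number `p(μ)` of a path `μ` (encoded as a list of edges, first
edge = range side), defined recursively: `p(e) = 1` if `m(e) = 0` and
`p(e) = n(e)/gcd(n(e), |m(e)|)` otherwise; for `μ = (e, ν)`, `p(μ) = 1` if `m(e) = 0`
and `p(μ) = n(e)p(ν)/gcd(n(e)p(ν), |m(e)|)` otherwise. (The empty path has `p = 1`.) -/
def contractionNum {E : Type*} (n : E → ℕ) (m : E → ℤ) : List E → ℕ
  | [] => 1
  | e :: ν =>
    if m e = 0 then 1
    else (n e * contractionNum n m ν) / Nat.gcd (n e * contractionNum n m ν) (m e).natAbs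

theorem Nat.div_gcd_dvd_div_gcd_of_dvd {a b c : ℕ} (hab : a ∣ b) :
    a / a.gcd c ∣ b / b.gcd c := by
  obtain ⟨k, rfl⟩ := hab
  have hgcd : (a * k).gcd c ∣ a.gcd c * k := by
    rw [Nat.gcd_comm, Nat.gcd_comm a]
    exact (gcd_mul_dvd_mul_gcd c a k).trans (mul_dvd_mul_left _ (Nat.gcd_dvd_right c k))
  rw [Nat.dvd_div_iff_mul_dvd (Nat.gcd_dvd_left _ _)]
  calc (a * k).gcd c * (a / a.gcd c) ∣ a.gcd c * k * (a / a.gcd c) := mul_dvd_mul_right hgcd _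
    _ = a * k := by rw [mul_right_comm, Nat.mul_div_cancel' (Nat.gcd_dvd_left a c)]

theorem stmt5_general {E : Type*} (n : E → ℕ) (m : E → ℤ)
    (μ ν : List E) :
    contractionNum n m μ ∣ contractionNum n m (μ ++ ν) := by
  induction μ with
  | nil => exact one_dvd _
  | cons e μ ih =>
    simp only [List.cons_append, contractionNum]
    split
    · exact dvd_rfl
    · exact Nat.div_gcd_dvd_div_gcd_of_dvd (mul_dvd_mul_left _ ih)

/-- For composable paths `μ` and `ν` of positive length in a directed graph
(composability of consecutive edges `e, f` means `dom e = ran f`),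
`p(μ)` divides `p((μ,ν))`. -/
theorem stmt5 {V E : Type*} (dom ran : E → V) (n : E → ℕ) (m : E → ℤ)
    (hn : ∀ e, 0 < n e)
    (μ ν : List E) (hμ : μ ≠ []) (hν : ν ≠ [])
    (hchain : (μ ++ ν).Chain' (fun e f => dom e = ran f)) :
    contractionNum n m μ ∣ contractionNum n m (μ ++ ν) :=
  stmt5_general n m μ ν
end

section
/- Let E = (E⁰, E¹, d, r) be a directed graph with maps n : E¹ → ℤ₊ and m : E¹ → ℤ, and let p(·) be the contraction number of paths (defined recursively as: p(e) = 1 if m(e) = 0, else n(e)/gcd(n(e),|m(e)|); and p((e,ν)) = 1 if m(e) = 0, else n(e)p(ν)/gcd(n(e)p(ν),|m(e)|)). For a path μ = (e₁,…,e_k), define 𝕋_μ = { (z₁,…,z_k) ∈ 𝕋^k : z_i^{n(e_i)} = z_{i+1}^{m(e_{i+1})} for 1 ≤ i ≤ k−1 }, d_μ(z) = z_k^{n(e_k)} and r_μ(z) = z_1^{m(e₁)}. Then for every z₀ ∈ 𝕋 there exists z_k ∈ 𝕋 such that r_μ(d_μ^{-1}(z₀)) = { z_k e^{2πij/p(μ)}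 : j = 0, 1, …, p(μ)−1 }. -/
/-!
Write `μ = (e, ν)`. The first coordinates of the points of `d_μ⁻¹(z₀)` are the `n(e)`-th roots of
the values `z₂ ^ m(f)`, where `z₂` ranges over the first coordinates for `ν = (f, …)`. By induction
these form a coset of the group of `n(e) p(ν)`-th roots of unity. Raising a coset of the `N`-th
roots of unity to the power `k ≠ 0` gives a coset of the `N / gcd(N, |k|)`-th roots of unity
(Bézout), and this is where `p(μ)` comes from.
-/

open Real

section RootCoset

variable {G : Type*} [CommGroup G]

def rootCoset (u : G) (N : ℕ) : Set G := {w | (u⁻¹ * w) ^ N = 1}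

lemma mem_rootCoset_self (u : G) (N : ℕ) : u ∈ rootCoset u N := by
  simp [rootCoset]

lemma rootCoset_one (u : G) : rootCoset u 1 = {u} := by
  ext w
  simp [rootCoset, inv_mul_eq_one, eq_comm]

lemma preimage_pow_rootCoset {N : ℕ} {v w : G} (hv : v ^ N = w) (P : ℕ) :
    (· ^ N) ⁻¹' rootCoset w P = rootCoset v (N * P) := by
  ext z
  simp only [rootCoset, Set.mem_preimage, Set.mem_ofPred_eq, ← hv, ← inv_pow, ← mul_pow, pow_mul]

lemma exists_pow_eq_one_and_zpow_eq [RootableBy G ℕ] {N : ℕ} (hN : N ≠ 0) {k : ℤ} {τ : G}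
    (hτ : τ ^ (N / N.gcd k.natAbs) = 1) : ∃ s : G, s ^ N = 1 ∧ s ^ k = τ := by
  obtain ⟨r, rfl⟩ := RootableBy.surjective_pow G ℕ (Nat.gcd_ne_zero_left hN (n := k.natAbs)) τ
  have hrN : r ^ N = 1 := by
    rw [← Nat.mul_div_cancel' (Nat.gcd_dvd_left N k.natAbs), pow_mul]
    exact hτ
  have bezout : ((N.gcd k.natAbs : ℕ) : ℤ) = N * Int.gcdA N k + k * Int.gcdB N k :=
    Int.gcd_eq_gcd_ab N k
  -- `r ^ N = 1`, so Bézout's `gcd = N A + k B` makes `s = r ^ B` a `k`-th root of `r ^ gcd = τ`.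
  refine ⟨r ^ Int.gcdB N k, ?_, ?_⟩
  · rw [← zpow_natCast, ← zpow_mul, mul_comm, zpow_mul, zpow_natCast, hrN, one_zpow]
  · calc (r ^ Int.gcdB N k) ^ k
        = r ^ ((N.gcd k.natAbs : ℕ) : ℤ) * ((r ^ N) ^ Int.gcdA N k)⁻¹ := by
          rw [← zpow_natCast r N, ← zpow_mul, ← zpow_mul, ← zpow_neg, ← zpow_add, bezout]
          ring_nf
      _ = r ^ N.gcd k.natAbs := by rw [hrN, one_zpow, inv_one, mul_one, zpow_natCast]

lemma image_zpow_rootCoset [RootableBy G ℕ] (u : G) {N : ℕ} (hN : N ≠ 0) (k : ℤ) :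
    (· ^ k) '' rootCoset u N = rootCoset (u ^ k) (if k = 0 then 1 else N / N.gcd k.natAbs) := by
  ext t
  split_ifs with hk
  · subst hk
    simp only [zpow_zero, rootCoset, inv_one, one_mul, pow_one, Set.mem_ofPred_eq]
    exact ⟨fun ⟨_, _, ht⟩ => ht.symm, fun ht => ⟨u, mem_rootCoset_self u N, ht.symm⟩⟩
  constructor
  · rintro ⟨z, hz, rfl⟩
    obtain ⟨a, ha⟩ : ((N.gcd k.natAbs : ℕ) : ℤ) ∣ k := Int.natCast_dvd.mpr (Nat.gcd_dvd_right _ _)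
    have hexp : k * ((N / N.gcd k.natAbs : ℕ) : ℤ) = N * a := by
      have hdiv : ((N.gcd k.natAbs * (N / N.gcd k.natAbs) : ℕ) : ℤ) = N := by
        rw [Nat.mul_div_cancel' (Nat.gcd_dvd_left _ _)]
      rw [Nat.cast_mul] at hdiv
      linear_combination ((N / N.gcd k.natAbs : ℕ) : ℤ) * ha + a * hdiv
    change ((u ^ k)⁻¹ * z ^ k) ^ _ = 1
    rw [← inv_zpow, ← mul_zpow, ← zpow_natCast, ← zpow_mul, hexp, zpow_mul, zpow_natCast, hz,
      one_zpow]
  · intro ht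
    obtain ⟨s, hsN, hsk⟩ := exists_pow_eq_one_and_zpow_eq hN ht
    refine ⟨u * s, ?_, ?_⟩
    · change (u⁻¹ * (u * s)) ^ N = 1
      rw [inv_mul_cancel_left, hsN]
    · simp only [mul_zpow, hsk, mul_inv_cancel_left]

end RootCoset

namespace Circle

lemma exists_pow_eq {N : ℕ} (hN : N ≠ 0) (c : Circle) : ∃ u : Circle, u ^ N = c :=
  ⟨exp (Complex.arg c / N), by
    rw [← exp_nsmul, nsmul_eq_mul, mul_div_cancel₀ _ (Nat.cast_ne_zero.2 hN), exp_arg]⟩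

noncomputable instance : RootableBy Circle ℕ :=
  rootableByOfPowLeftSurj _ _ fun hN c => exists_pow_eq hN c

lemma pow_eq_one_iff_exists_exp {P : ℕ} (hP : P ≠ 0) {w : Circle} :
    w ^ P = 1 ↔ ∃ j < P, exp (2 * π * j / P) = w := by
  have : NeZero P := ⟨hP⟩
  have h := Complex.mem_rootsOfUnity P (toUnits w)
  simp only [mem_rootsOfUnity, Units.ext_iff, Units.val_pow_eq_pow_val, toUnits_apply,
    Units.val_mk0, Units.val_one] at h
  rw [← coe_eq_one, coe_pow, h]
  refine exists_congr fun j => and_congr_right fun _ => ?_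
  rw [← coe_inj, coe_exp]
  push_cast
  ring_nf

end Circle

lemma rootCoset_eq_setOf_exp (u : Circle) {P : ℕ} (hP : P ≠ 0) :
    rootCoset u P = {w | ∃ j : ℕ, j < P ∧ w = u * Circle.exp (2 * π * j / P)} := by
  ext w
  simp only [rootCoset, Set.mem_ofPred_eq, Circle.pow_eq_one_iff_exists_exp hP,
    eq_inv_mul_iff_mul_eq, eq_comm (a := w)]

section Path

variable {E : Type*} (n : E → ℕ) (m : E → ℤ)

lemma contractionNum_cons (e : E) (ν : List E) :
    contractionNum n m (e :: ν) =
      if m e = 0 then 1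
      else (n e * contractionNum n m ν) / (n e * contractionNum n m ν).gcd (m e).natAbs :=
  rfl

lemma contractionNum_pos (hn : ∀ e, 0 < n e) (μ : List E) : 0 < contractionNum n m μ := by
  induction μ with
  | nil => exact Nat.one_pos
  | cons e ν ih =>
    have hN : 0 < n e * contractionNum n m ν := Nat.mul_pos (hn e) ih
    rw [contractionNum_cons]
    split_ifs
    · exact Nat.one_pos
    · exact Nat.div_pos (Nat.gcd_le_left _ hN) (Nat.gcd_pos_of_pos_left _ hN)

variable {G : Type*} [Group G]

/-- `d_μ⁻¹(z₀) ⊆ 𝕋_μ`, with the coordinates `z₁, …, z_k` of the paper indexed from `0`. -/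
def pathFibre (μ : List E) (hμ : μ ≠ []) (z₀ : G) : Set (Fin μ.length → G) :=
  {z | (∀ (i : ℕ) (h : i + 1 < μ.length),
      z ⟨i, Nat.lt_of_succ_lt h⟩ ^ n (μ.get ⟨i, Nat.lt_of_succ_lt h⟩) =
        z ⟨i + 1, h⟩ ^ m (μ.get ⟨i + 1, h⟩)) ∧
    z ⟨μ.length - 1, Nat.sub_one_lt (List.length_pos_iff.mpr hμ).ne'⟩ ^ n (μ.getLast hμ) = z₀}

lemma image_head_pathFibre_singleton (e : E) (z₀ : G) :
    (fun z => z ⟨0, Nat.one_pos⟩) '' pathFibre n m [e] (List.cons_ne_nil e []) z₀ =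
      (· ^ n e) ⁻¹' {z₀} := by
  ext w
  constructor
  · rintro ⟨z, ⟨-, hz⟩, rfl⟩
    exact hz
  · intro hw
    exact ⟨fun _ => w, ⟨fun i h => absurd h (by simp), hw⟩, rfl⟩

lemma cons_mem_pathFibre_cons_cons (e f : E) (ν : List E) (z₀ : G) (w : G)
    (z : Fin (f :: ν).length → G) :
    (Fin.cons w z : Fin (e :: f :: ν).length → G) ∈
        pathFibre n m (e :: f :: ν) (List.cons_ne_nil _ _) z₀ ↔
      w ^ n e = z ⟨0, by simp⟩ ^ m f ∧ z ∈ pathFibre n m (f :: ν) (List.cons_ne_nil _ _) z₀ := by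
  simp only [pathFibre, Set.mem_ofPred_eq]
  constructor
  · rintro ⟨hchain, hlast⟩
    exact ⟨hchain 0 (Nat.succ_lt_succ (Nat.zero_lt_succ _)),
      fun i h => hchain (i + 1) (Nat.succ_lt_succ h), hlast⟩
  · rintro ⟨h0, hchain, hlast⟩
    refine ⟨?_, hlast⟩
    rintro (_ | i) h
    · exact h0
    · exact hchain i (by simpa using h)

lemma image_head_pathFibre_cons_cons (e f : E) (ν : List E) (z₀ : G) :
    (fun z => z ⟨0, by simp⟩) '' pathFibre n m (e :: f :: ν) (List.cons_ne_nil _ _) z₀ =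
      (· ^ n e) ⁻¹' ((· ^ m f) '' ((fun z => z ⟨0, by simp⟩) ''
        pathFibre n m (f :: ν) (List.cons_ne_nil _ _) z₀)) := by
  ext w
  constructor
  · rintro ⟨z, hz, rfl⟩
    rw [← Fin.cons_self_tail z, cons_mem_pathFibre_cons_cons] at hz
    exact ⟨_, ⟨Fin.tail z, hz.2, rfl⟩, hz.1.symm⟩
  · rintro ⟨_, ⟨z, hz, rfl⟩, hw⟩
    exact ⟨Fin.cons w z, (cons_mem_pathFibre_cons_cons n m e f ν z₀ w z).2 ⟨hw.symm, hz⟩, rfl⟩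

end Path

lemma exists_image_head_pathFibre_eq_rootCoset {E G : Type*} [CommGroup G] [RootableBy G ℕ]
    (n : E → ℕ) (m : E → ℤ) (hn : ∀ e, 0 < n e) (z₀ : G) (e : E) (ν : List E) :
    ∃ u : G, (fun z => z ⟨0, by simp⟩) '' pathFibre n m (e :: ν) (List.cons_ne_nil _ _) z₀ =
      rootCoset u (n e * contractionNum n m ν) := by
  induction ν generalizing e with
  | nil =>
    obtain ⟨u, hu⟩ := RootableBy.surjective_pow G ℕ (hn e).ne' z₀
    refine ⟨u, ?_⟩
    rw [image_head_pathFibre_singleton, ← rootCoset_one, preimage_pow_rootCoset hu]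
    rfl
  | cons f ν ih =>
    obtain ⟨u, hu⟩ := ih f
    obtain ⟨v, hv⟩ := RootableBy.surjective_pow G ℕ (hn e).ne' (u ^ m f)
    have hN := (Nat.mul_pos (hn f) (contractionNum_pos n m hn ν)).ne'
    refine ⟨v, ?_⟩
    rw [image_head_pathFibre_cons_cons, hu, image_zpow_rootCoset u hN, ← contractionNum_cons,
      preimage_pow_rootCoset hv]

/-- For a path `μ = (e₁, …, e_k)` in a directed graph with weights `n : E¹ → ℤ₊`,
`m : E¹ → ℤ`, consider `𝕋_μ = { z ∈ 𝕋^k : z_i^{n(e_i)} = z_{i+1}^{m(e_{i+1})} }` with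
`d_μ(z) = z_k^{n(e_k)}` and `r_μ(z) = z_1^{m(e_1)}`. Then for every `z₀ ∈ 𝕋` there is
`z_k ∈ 𝕋` with `r_μ(d_μ⁻¹(z₀)) = { z_k e^{2πij/p(μ)} : j = 0, …, p(μ)−1 }`. -/
theorem stmt6 {E : Type*} (n : E → ℕ) (m : E → ℤ)
    (hn : ∀ e, 0 < n e)
    (μ : List E) (hμ : μ ≠ [])
    (z₀ : Circle) :
    ∃ zk : Circle,
      (fun z : Fin μ.length → Circle =>
          z ⟨0, List.length_pos_iff.mpr hμ⟩ ^ m (μ.head hμ)) ''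
        {z : Fin μ.length → Circle |
          (∀ (i : ℕ) (h : i + 1 < μ.length),
            z ⟨i, by omega⟩ ^ n (μ.get ⟨i, by omega⟩) =
              z ⟨i + 1, h⟩ ^ m (μ.get ⟨i + 1, h⟩)) ∧
          z ⟨μ.length - 1, by have := List.length_pos_iff.mpr hμ; omega⟩ ^ n (μ.getLast hμ) =
            z₀} =
      {w : Circle | ∃ j : ℕ, j < contractionNum n m μ ∧
        w = zk * Circle.exp (2 * π * j / contractionNum n m μ)} := by
  obtain ⟨e, ν, rfl⟩ := List.exists_cons_of_ne_nil hμ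
  obtain ⟨u, hu⟩ := exists_image_head_pathFibre_eq_rootCoset n m hn z₀ e ν
  have hN := (Nat.mul_pos (hn e) (contractionNum_pos n m hn ν)).ne'
  refine ⟨u ^ m e, ?_⟩
  calc _ = (· ^ m e) '' ((fun z => z ⟨0, by simp⟩) '' pathFibre n m (e :: ν) hμ z₀) :=
        (Set.image_image _ _ _).symm
    _ = _ := by
      rw [hu, image_zpow_rootCoset u hN, ← contractionNum_cons,
        rootCoset_eq_setOf_exp _ (contractionNum_pos n m hn _).ne']
end

section
/- Let T, S : ℤ^(∞) → ℤ^(∞) be injective group homomorphisms given by column-finite integer matrices, with coker T ≅ G₀ and coker S ≅ G₁. Define nonnegative matrices T⁺, T⁻, |S| entrywise by T⁺_{kl} = max(T_{kl},0), T⁻_{kl} = max(−T_{kl},0), |S|_{kl} = |S_{kl}|, and let X be the tridiagonal matrix with X_{kl} = 1 iff |k−l| ≤ 1. Set N = [[2I, T⁺+|S|+X],[I, I+T⁻+|S|+X]] and consider I⁽²⁾ − N acting on ℤ^(∞) ⊕ ℤ^(∞). Then I⁽²⁾ − N factors as [[I,0],[I,I]] · [[−I,0],[0,T]] · [[I, T⁺+|S|+X],[0,I]];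 consequently I⁽²⁾ − N is injective and its cokernel is isomorphic to G₀. -/
open scoped Classical

/-- A matrix (indexed by `κ × ι`) is column-finite if each of its columns has only
finitely many nonzero entries; such matrices act on `ℤ^(∞)`. -/
def ColFin {ι κ : Type*} (A : κ → ι → ℤ) : Prop :=
  ∀ l, (Function.support fun k => A k l).Finite

/-- The `l`-th column of a matrix as a finitely supported function (junk value `0`
if the column is not finitely supported). -/
noncomputable def matCol {ι κ : Type*} (A : κ → ι → ℤ) (l : ι) : κ →₀ ℤ :=
  if h : (Function.support fun k => A k l).Finite then
    ⟨h.toFinset, fun k => A k l, by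
      intro k; simp [Set.Finite.mem_toFinset, Function.mem_support]⟩
  else 0

/-- The action of a (column-finite) matrix on `ℤ^(∞)`, as a `ℤ`-linear map. -/
noncomputable def matHom {ι κ : Type*} (A : κ → ι → ℤ) : (ι →₀ ℤ) →ₗ[ℤ] (κ →₀ ℤ) :=
  Finsupp.linearCombination ℤ (matCol A)

/-- Block matrix `[[A, B], [C, D]]` indexed by `ι ⊕ ι`. -/
def blockMat {ι : Type*} (A B C D : ι → ι → ℤ) : (ι ⊕ ι) → (ι ⊕ ι) → ℤ
  | Sum.inl k, Sum.inl l => A k l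
  | Sum.inl k, Sum.inr l => B k l
  | Sum.inr k, Sum.inl l => C k l
  | Sum.inr k, Sum.inr l => D k l

/-- The identity matrix. -/
def idMat (ι : Type*) [DecidableEq ι] : ι → ι → ℤ := fun k l => if k = l then 1 else 0

section Aux

variable {ι κ : Type*}

lemma matCol_apply {A : κ → ι → ℤ} (hA : ColFin A) (l : ι) (k : κ) :
    matCol A l k = A k l := by
  rw [matCol, dif_pos (hA l)]; rfl

@[simp] lemma matHom_single (A : κ → ι → ℤ) (l : ι) (b : ℤ) :
    matHom A (Finsupp.single l b) = b • matCol A l := by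
  simp [matHom]

lemma colFin_mono {A B : κ → ι → ℤ} (hB : ColFin B)
    (h : ∀ l, (Function.support fun k => A k l) ⊆ (Function.support fun k => B k l)) :
    ColFin A := fun l => (hB l).subset (h l)

lemma colFin_id [DecidableEq ι] : ColFin (idMat ι) := by
  intro l
  apply Set.Finite.subset (Set.finite_singleton l)
  intro k hk
  simp only [Function.mem_support, idMat] at hk
  by_contra h
  simp only [Set.mem_singleton_iff] at h
  exact hk (if_neg h)

lemma colFin_zero : ColFin (fun (_ : κ) (_ : ι) => (0 : ℤ)) := by
  intro l; simp [Function.support]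

lemma colFin_neg {A : κ → ι → ℤ} (hA : ColFin A) :
    ColFin (fun k l => -(A k l)) := by
  refine colFin_mono hA fun l k hk => ?_
  simp only [Function.mem_support] at hk ⊢; exact fun h => hk (by rw [h, neg_zero])

lemma colFin_add {A B : κ → ι → ℤ} (hA : ColFin A) (hB : ColFin B) :
    ColFin (fun k l => A k l + B k l) := by
  intro l
  apply Set.Finite.subset ((hA l).union (hB l))
  intro k hk
  simp only [Function.mem_support, Set.mem_union] at hk ⊢
  by_contra h
  push_neg at h
  exact hk (by rw [h.1, h.2, add_zero])

lemma colFin_sub {A B : κ → ι → ℤ} (hA : ColFin A) (hB : ColFin B) :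
    ColFin (fun k l => A k l - B k l) := by
  have := colFin_add hA (colFin_neg hB)
  simpa [sub_eq_add_neg] using this

-- matCol equalities
lemma matCol_eq {A B : κ → ι → ℤ} (hA : ColFin A) (hB : ColFin B)
    (h : ∀ k l, A k l = B k l) : matCol A = matCol B := by
  funext l; ext k; rw [matCol_apply hA, matCol_apply hB]; exact h k l

lemma matHom_congr {A B : κ → ι → ℤ} (hA : ColFin A) (hB : ColFin B)
    (h : ∀ k l, A k l = B k l) : matHom A = matHom B := by
  unfold matHom; rw [matCol_eq hA hB h]

lemma matHom_neg {A : κ → ι → ℤ} (hA : ColFin A) :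
    matHom (fun k l => -(A k l)) = -(matHom A) := by
  refine Finsupp.lhom_ext fun l b => ?_
  have h1 : matCol (fun k l => -(A k l)) l = -(matCol A l) := by
    ext k; rw [matCol_apply (colFin_neg hA)]
    simp [matCol_apply hA]
  simp [h1]

lemma matHom_add {A B : κ → ι → ℤ} (hA : ColFin A) (hB : ColFin B) :
    matHom (fun k l => A k l + B k l) = matHom A + matHom B := by
  refine Finsupp.lhom_ext fun l b => ?_
  have h1 : matCol (fun k l => A k l + B k l) l = matCol A l + matCol B l := by
    ext k; rw [matCol_apply (colFin_add hA hB)]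
    simp [matCol_apply hA, matCol_apply hB]
  simp [h1, smul_add]

lemma matHom_sub {A B : κ → ι → ℤ} (hA : ColFin A) (hB : ColFin B) :
    matHom (fun k l => A k l - B k l) = matHom A - matHom B := by
  have h := matHom_add hA (colFin_neg hB)
  rw [matHom_neg hB] at h
  have h2 : (fun k l => A k l - B k l) = (fun k l => A k l + -(B k l)) := by
    funext k l; ring
  rw [h2, h]; abel

lemma matHom_zero : matHom (fun (_ : κ) (_ : ι) => (0 : ℤ)) = 0 := by
  refine Finsupp.lhom_ext fun l b => ?_
  have h1 : matCol (fun (_ : κ) (_ : ι) => (0 : ℤ)) l = 0 := by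
    ext k; rw [matCol_apply colFin_zero]; rfl
  simp [h1]

lemma matHom_id [DecidableEq ι] : matHom (idMat ι) = LinearMap.id := by
  refine Finsupp.lhom_ext fun l b => ?_
  have h1 : matCol (idMat ι) l = Finsupp.single l 1 := by
    ext k; rw [matCol_apply colFin_id]
    simp [idMat, Finsupp.single_apply, eq_comm]
  simp [h1, Finsupp.smul_single]

end Aux

section Block

variable {ι : Type*}

lemma colFin_block {A B C D : ι → ι → ℤ} (hA : ColFin A) (hB : ColFin B)
    (hC : ColFin C) (hD : ColFin D) : ColFin (blockMat A B C D) := by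
  intro l
  cases l with
  | inl l =>
    apply Set.Finite.subset (((hA l).image Sum.inl).union ((hC l).image Sum.inr))
    intro k hk
    cases k with
    | inl k => exact Or.inl ⟨k, hk, rfl⟩
    | inr k => exact Or.inr ⟨k, hk, rfl⟩
  | inr l =>
    apply Set.Finite.subset (((hB l).image Sum.inl).union ((hD l).image Sum.inr))
    intro k hk
    cases k with
    | inl k => exact Or.inl ⟨k, hk, rfl⟩
    | inr k => exact Or.inr ⟨k, hk, rfl⟩

noncomputable def eqv (ι : Type*) : ((ι ⊕ ι) →₀ ℤ) ≃ₗ[ℤ] ((ι →₀ ℤ) × (ι →₀ ℤ)) :=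
  Finsupp.sumFinsuppLEquivProdFinsupp ℤ

noncomputable def Fblk (a b c d : (ι →₀ ℤ) →ₗ[ℤ] (ι →₀ ℤ)) :
    ((ι →₀ ℤ) × (ι →₀ ℤ)) →ₗ[ℤ] ((ι →₀ ℤ) × (ι →₀ ℤ)) :=
  LinearMap.prod (a ∘ₗ LinearMap.fst ℤ _ _ + b ∘ₗ LinearMap.snd ℤ _ _)
    (c ∘ₗ LinearMap.fst ℤ _ _ + d ∘ₗ LinearMap.snd ℤ _ _)

@[simp] lemma Fblk_apply (a b c d : (ι →₀ ℤ) →ₗ[ℤ] (ι →₀ ℤ)) (p : (ι →₀ ℤ) × (ι →₀ ℤ)) :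
    Fblk a b c d p = (a p.1 + b p.2, c p.1 + d p.2) := by
  simp [Fblk]

lemma eqv_single_inl (l : ι) (b : ℤ) :
    eqv ι (Finsupp.single (Sum.inl l) b) = (Finsupp.single l b, 0) := by
  refine Prod.ext ?_ ?_ <;> ext k
  · rw [eqv, Finsupp.fst_sumFinsuppLEquivProdFinsupp]
    simp [Finsupp.single_apply]
  · rw [eqv, Finsupp.snd_sumFinsuppLEquivProdFinsupp]
    simp [Finsupp.single_apply]

lemma eqv_single_inr (l : ι) (b : ℤ) :
    eqv ι (Finsupp.single (Sum.inr l) b) = (0, Finsupp.single l b) := by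
  refine Prod.ext ?_ ?_ <;> ext k
  · rw [eqv, Finsupp.fst_sumFinsuppLEquivProdFinsupp]
    simp [Finsupp.single_apply]
  · rw [eqv, Finsupp.snd_sumFinsuppLEquivProdFinsupp]
    simp [Finsupp.single_apply]

lemma matCol_block_inl {A B C D : ι → ι → ℤ} (hA : ColFin A) (hB : ColFin B)
    (hC : ColFin C) (hD : ColFin D) (l : ι) :
    matCol (blockMat A B C D) (Sum.inl l) = (eqv ι).symm (matCol A l, matCol C l) := by
  ext k
  cases k with
  | inl k =>
    rw [eqv, Finsupp.sumFinsuppLEquivProdFinsupp_symm_inl,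
      matCol_apply (colFin_block hA hB hC hD), matCol_apply hA]
    rfl
  | inr k =>
    rw [eqv, Finsupp.sumFinsuppLEquivProdFinsupp_symm_inr,
      matCol_apply (colFin_block hA hB hC hD), matCol_apply hC]
    rfl

lemma matCol_block_inr {A B C D : ι → ι → ℤ} (hA : ColFin A) (hB : ColFin B)
    (hC : ColFin C) (hD : ColFin D) (l : ι) :
    matCol (blockMat A B C D) (Sum.inr l) = (eqv ι).symm (matCol B l, matCol D l) := by
  ext k
  cases k with
  | inl k =>
    rw [eqv, Finsupp.sumFinsuppLEquivProdFinsupp_symm_inl,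
      matCol_apply (colFin_block hA hB hC hD), matCol_apply hB]
    rfl
  | inr k =>
    rw [eqv, Finsupp.sumFinsuppLEquivProdFinsupp_symm_inr,
      matCol_apply (colFin_block hA hB hC hD), matCol_apply hD]
    rfl

lemma blockHom {A B C D : ι → ι → ℤ} (hA : ColFin A) (hB : ColFin B)
    (hC : ColFin C) (hD : ColFin D) :
    matHom (blockMat A B C D) =
      ((eqv ι).symm.toLinearMap ∘ₗ Fblk (matHom A) (matHom B) (matHom C) (matHom D)) ∘ₗ
        (eqv ι).toLinearMap := by
  refine Finsupp.lhom_ext fun j b => ?_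
  cases j with
  | inl l =>
    simp only [LinearMap.comp_apply, LinearEquiv.coe_coe, eqv_single_inl, matHom_single,
      Fblk_apply, map_zero, add_zero, map_smul, Prod.smul_fst, Prod.smul_snd]
    rw [matCol_block_inl hA hB hC hD]
    rw [← Prod.smul_mk, map_smul]
  | inr l =>
    simp only [LinearMap.comp_apply, LinearEquiv.coe_coe, eqv_single_inr, matHom_single,
      Fblk_apply, map_zero, zero_add, map_smul, Prod.smul_fst, Prod.smul_snd]
    rw [matCol_block_inr hA hB hC hD]
    rw [← Prod.smul_mk, map_smul]

end Block

/-- Given injective column-finite `T, S : ℤ^(∞) → ℤ^(∞)` with `coker T ≅ G₀`,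
`coker S ≅ G₁`, form `T⁺, T⁻, |S|` entrywise and the tridiagonal `X`, and set
`N = [[2I, T⁺+|S|+X], [I, I+T⁻+|S|+X]]`. Then `I⁽²⁾ − N` factors as
`[[I,0],[I,I]] · [[−I,0],[0,T]] · [[I, T⁺+|S|+X],[0,I]]` (as maps on
`ℤ^(∞) ⊕ ℤ^(∞)`); consequently `I⁽²⁾ − N` is injective with cokernel `≅ G₀`. -/
theorem stmt10 (G₀ G₁ : Type) [AddCommGroup G₀] [AddCommGroup G₁]
    (T S : ℕ → ℕ → ℤ) (hT : ColFin T) (hS : ColFin S)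
    (hTinj : Function.Injective (matHom T)) (hSinj : Function.Injective (matHom S))
    (hTcok : Nonempty (((ℕ →₀ ℤ) ⧸ LinearMap.range (matHom T)) ≃+ G₀))
    (hScok : Nonempty (((ℕ →₀ ℤ) ⧸ LinearMap.range (matHom S)) ≃+ G₁)) :
    let Tp : ℕ → ℕ → ℤ := fun k l => max (T k l) 0
    let Tm : ℕ → ℕ → ℤ := fun k l => max (-(T k l)) 0
    let Sa : ℕ → ℕ → ℤ := fun k l => |S k l|
    let X : ℕ → ℕ → ℤ := fun k l => if k ≤ l + 1 ∧ l ≤ k + 1 then 1 else 0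
    let B : ℕ → ℕ → ℤ := fun k l => Tp k l + Sa k l + X k l
    let N : (ℕ ⊕ ℕ) → (ℕ ⊕ ℕ) → ℤ :=
      blockMat (fun k l => 2 * idMat ℕ k l) B (idMat ℕ)
        (fun k l => idMat ℕ k l + Tm k l + Sa k l + X k l)
    let IN : (ℕ ⊕ ℕ) → (ℕ ⊕ ℕ) → ℤ := fun k l => idMat (ℕ ⊕ ℕ) k l - N k l
    (matHom IN =
      (matHom (blockMat (idMat ℕ) (fun _ _ => 0) (idMat ℕ) (idMat ℕ))).comp
        ((matHom (blockMat (fun k l => -(idMat ℕ k l)) (fun _ _ => 0) (fun _ _ => 0)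
            T)).comp
          (matHom (blockMat (idMat ℕ) B (fun _ _ => 0) (idMat ℕ))))) ∧
    Function.Injective (matHom IN) ∧
    Nonempty ((((ℕ ⊕ ℕ) →₀ ℤ) ⧸ LinearMap.range (matHom IN)) ≃+ G₀) := by
  intro Tp Tm Sa X B N IN
  -- column finiteness
  have hTp : ColFin Tp := by
    refine colFin_mono hT fun l k hk => ?_
    simp only [Function.mem_support, Tp] at hk ⊢
    intro h; exact hk (by simp [h])
  have hTm : ColFin Tm := by
    refine colFin_mono hT fun l k hk => ?_
    simp only [Function.mem_support, Tm] at hk ⊢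
    intro h; exact hk (by simp [h])
  have hSa : ColFin Sa := by
    refine colFin_mono hS fun l k hk => ?_
    simp only [Function.mem_support, Sa] at hk ⊢
    intro h; exact hk (by simp [h])
  have hX : ColFin X := by
    intro l
    apply Set.Finite.subset (Set.finite_Iic (l + 1))
    intro k hk
    simp only [Function.mem_support, X] at hk
    by_contra h
    simp only [Set.mem_Iic, not_le] at h
    exact hk (if_neg (by omega))
  have hB : ColFin B := colFin_add (colFin_add hTp hSa) hX
  have hTB : ColFin (fun k l => T k l - B k l) := colFin_sub hT hB
  -- IN as a block matrix
  have hINblock : IN = blockMat (fun k l => -(idMat ℕ k l)) (fun k l => -(B k l))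
      (fun k l => -(idMat ℕ k l)) (fun k l => T k l - B k l) := by
    funext k l
    cases k with
    | inl k =>
      cases l with
      | inl l =>
        simp only [IN, N, blockMat, idMat, Sum.inl.injEq]
        split <;> ring
      | inr l =>
        simp only [IN, N, blockMat, idMat]
        rw [if_neg (by simp)]
        ring
    | inr k =>
      cases l with
      | inl l =>
        simp only [IN, N, blockMat, idMat]
        rw [if_neg (by simp)]
        ring
      | inr l =>
        simp only [IN, N, blockMat, idMat, Sum.inr.injEq, B, Tp, Tm, Sa, X]
        have h : max (T k l) 0 - max (-(T k l)) 0 = T k l := by omega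
        split <;> linarith
  set e := eqv ℕ with he
  set t := matHom T with ht
  set bB := matHom B with hbB
  have hIN : matHom IN =
      (e.symm.toLinearMap ∘ₗ Fblk (-LinearMap.id) (-bB) (-LinearMap.id) (t - bB)) ∘ₗ
        e.toLinearMap := by
    rw [hINblock, blockHom (colFin_neg colFin_id) (colFin_neg hB) (colFin_neg colFin_id) hTB,
      matHom_neg colFin_id, matHom_neg hB, matHom_sub hT hB, matHom_id]
  have hU : matHom (blockMat (idMat ℕ) (fun _ _ => 0) (idMat ℕ) (idMat ℕ)) =
      (e.symm.toLinearMap ∘ₗ Fblk LinearMap.id 0 LinearMap.id LinearMap.id) ∘ₗ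
        e.toLinearMap := by
    rw [blockHom colFin_id colFin_zero colFin_id colFin_id, matHom_zero, matHom_id]
  have hM : matHom (blockMat (fun k l => -(idMat ℕ k l)) (fun _ _ => 0) (fun _ _ => 0) T) =
      (e.symm.toLinearMap ∘ₗ Fblk (-LinearMap.id) 0 0 t) ∘ₗ e.toLinearMap := by
    rw [blockHom (colFin_neg colFin_id) colFin_zero colFin_zero hT,
      matHom_neg colFin_id, matHom_zero, matHom_id]
  have hR : matHom (blockMat (idMat ℕ) B (fun _ _ => 0) (idMat ℕ)) =
      (e.symm.toLinearMap ∘ₗ Fblk LinearMap.id bB 0 LinearMap.id) ∘ₗ e.toLinearMap := by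
    rw [blockHom colFin_id hB colFin_zero colFin_id, matHom_zero, matHom_id]
  refine ⟨?_, ?_, ?_⟩
  · -- factorization
    rw [hIN, hU, hM, hR]
    refine LinearMap.ext fun z => ?_
    simp only [LinearMap.comp_apply, LinearEquiv.coe_coe, LinearEquiv.apply_symm_apply,
      Fblk_apply, LinearMap.id_apply, LinearMap.neg_apply, LinearMap.zero_apply,
      LinearMap.sub_apply, map_add, map_neg, map_sub]
    refine congrArg _ (Prod.ext ?_ ?_) <;> simp <;> abel
  · -- injectivity
    rw [hIN]
    intro z1 z2 h
    simp only [LinearMap.comp_apply, LinearEquiv.coe_coe] at h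
    have h2 := (eqv ℕ).symm.injective h
    set p := e z1 with hp
    set q := e z2 with hq
    simp only [Fblk_apply, LinearMap.id_apply, LinearMap.neg_apply, LinearMap.sub_apply,
      Prod.mk.injEq] at h2
    obtain ⟨h3, h4⟩ := h2
    have hy : t p.2 = t q.2 := by
      have := sub_eq_sub_iff_sub_eq_sub.mp (congrArg₂ (· - ·) h4 h3)
      -- fallback: direct computation
      have h5 : (-p.1 + (t p.2 - bB p.2)) - (-p.1 + -bB p.2) =
          (-q.1 + (t q.2 - bB q.2)) - (-q.1 + -bB q.2) := by rw [h3, h4]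
      calc t p.2 = (-p.1 + (t p.2 - bB p.2)) - (-p.1 + -bB p.2) := by abel
        _ = (-q.1 + (t q.2 - bB q.2)) - (-q.1 + -bB q.2) := h5
        _ = t q.2 := by abel
    have hy2 : p.2 = q.2 := hTinj hy
    have hx : p.1 = q.1 := by
      have h6 : -p.1 + -bB p.2 = -q.1 + -bB q.2 := h3
      rw [hy2] at h6
      have := add_right_cancel h6
      exact neg_injective this
    have : p = q := Prod.ext hx hy2
    exact e.injective (hp ▸ hq ▸ this)
  · -- cokernel
    set φ : ((ℕ ⊕ ℕ) →₀ ℤ) →ₗ[ℤ] ((ℕ →₀ ℤ) ⧸ LinearMap.range t) :=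
      (Submodule.mkQ (LinearMap.range t)) ∘ₗ
        ((LinearMap.snd ℤ (ℕ →₀ ℤ) (ℕ →₀ ℤ) - LinearMap.fst ℤ (ℕ →₀ ℤ) (ℕ →₀ ℤ)) ∘ₗ
          e.toLinearMap) with hφ
    have hφ_apply : ∀ z, φ z = Submodule.Quotient.mk ((e z).2 - (e z).1) := by
      intro z; simp [hφ, Submodule.mkQ_apply]
    have hsurj : Function.Surjective φ := by
      intro c
      obtain ⟨m, rfl⟩ := Submodule.mkQ_surjective _ c
      refine ⟨e.symm (0, m), ?_⟩
      rw [hφ_apply]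
      simp
    have hker : LinearMap.ker φ = LinearMap.range (matHom IN) := by
      ext z
      simp only [LinearMap.mem_ker, LinearMap.mem_range]
      rw [hφ_apply, Submodule.Quotient.mk_eq_zero]
      constructor
      · intro hz
        obtain ⟨y, hy⟩ := hz
        refine ⟨e.symm (-(e z).1 - bB y, y), ?_⟩
        rw [hIN]
        simp only [LinearMap.comp_apply, LinearEquiv.coe_coe, LinearEquiv.apply_symm_apply,
          Fblk_apply, LinearMap.id_apply, LinearMap.neg_apply, LinearMap.sub_apply]
        have h1 : -(-(e z).1 - bB y) + -bB y = (e z).1 := by abel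
        have h2 : -(-(e z).1 - bB y) + (t y - bB y) = (e z).2 := by
          rw [hy]; abel
        rw [h1, h2]
        simp
      · rintro ⟨w, rfl⟩
        rw [hIN]
        simp only [LinearMap.comp_apply, LinearEquiv.coe_coe, LinearEquiv.apply_symm_apply,
          Fblk_apply, LinearMap.id_apply, LinearMap.neg_apply, LinearMap.sub_apply]
        refine ⟨(e w).2, ?_⟩
        abel
    have equiv1 := (φ.quotKerEquivOfSurjective hsurj).toAddEquiv
    rw [hker] at equiv1
    exact ⟨equiv1.trans hTcok.some⟩
end

section
/- For any countable abelian groups G₀ and G₁ there exist matrices N ∈ M_∞(ℕ) and M ∈ M_∞(ℤ) (column-finite, indexed by ℤ₊ × ℤ₊) such that: (i) N_{kl} = 0 implies M_{kl} = 0; (ii) N_{kk} ≥ 2 and M_{kk} = 1 for all k; (iii) the directed graph with an edge from l to k whenever N_{kl} ≥ 1 is strongly connected; (iv) the maps I − N and I − M on ℤ^(∞) are injective with coker(I−N) ≅ G₀ and coker(I−M) ≅ G₁. -/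
open scoped Classical

namespace Stmt11Aux


open Finsupp Function Submodule

abbrev FF := ℕ →₀ ℤ

/-- coordinate formula for linear combinations -/
lemma lc_apply (v : ℕ → FF) (c : FF) (k : ℕ) :
    Finsupp.linearCombination ℤ v c k = c.sum (fun l a => a * v l k) := by
  rw [Finsupp.linearCombination_apply, Finsupp.sum_apply]
  exact Finsupp.sum_congr (fun l _ => by rw [Finsupp.smul_apply, smul_eq_mul])

lemma lc_eq_sum (v : ℕ → FF) (c : FF) :
    Finsupp.linearCombination ℤ v c = c.sum (fun l a => a • v l) :=
  Finsupp.linearCombination_apply ℤ c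

/-- doubling maps -/
def dbl : ℕ → ℕ := fun s => 2 * s
def dblo : ℕ → ℕ := fun s => 2 * s + 1

lemma dbl_inj : Function.Injective dbl := fun a b h => by simp [dbl] at h; omega
lemma dblo_inj : Function.Injective dblo := fun a b h => by simp [dblo] at h; omega

/-- positive and negative parts -/
noncomputable def posP (v : FF) : FF := v.mapRange (fun z => max z 0) (by simp)
noncomputable def negP (v : FF) : FF := v.mapRange (fun z => max (-z) 0) (by simp)

lemma posP_apply (v : FF) (k : ℕ) : posP v k = max (v k) 0 := Finsupp.mapRange_apply
lemma negP_apply (v : FF) (k : ℕ) : negP v k = max (-(v k)) 0 := Finsupp.mapRange_apply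

lemma posP_sub_negP (v : FF) : posP v - negP v = v := by
  ext k
  rw [Finsupp.sub_apply, posP_apply, negP_apply]
  omega

/-- spread of a vector over even (positive part) and odd (negative part) coordinates -/
noncomputable def spread (v : FF) : FF :=
  Finsupp.mapDomain dbl (posP v) + Finsupp.mapDomain dblo (negP v)

lemma spread_nonneg (v : FF) (k : ℕ) : 0 ≤ spread v k := by
  rw [spread, Finsupp.add_apply]
  have h1 : 0 ≤ Finsupp.mapDomain dbl (posP v) k := by
    rcases Nat.even_or_odd k with ⟨s, hs⟩ | ⟨s, hs⟩
    · have : k = dbl s := by unfold dbl; omega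
      rw [this, Finsupp.mapDomain_apply dbl_inj, posP_apply]; positivity
    · rw [Finsupp.mapDomain_notin_range]
      intro ⟨s, hsk⟩; simp [dbl] at hsk; omega
  have h2 : 0 ≤ Finsupp.mapDomain dblo (negP v) k := by
    rcases Nat.even_or_odd k with ⟨s, hs⟩ | ⟨s, hs⟩
    · rw [Finsupp.mapDomain_notin_range]
      intro ⟨s', hsk⟩; simp [dblo] at hsk; omega
    · have : k = dblo s := by unfold dblo; omega
      rw [this, Finsupp.mapDomain_apply dblo_inj, negP_apply]; positivity
  omega

lemma spread_even (v : FF) (s : ℕ) : spread v (2 * s) = max (v s) 0 := by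
  rw [spread, Finsupp.add_apply]
  have h1 : Finsupp.mapDomain dbl (posP v) (2 * s) = max (v s) 0 := by
    have : (2:ℕ) * s = dbl s := rfl
    rw [this, Finsupp.mapDomain_apply dbl_inj, posP_apply]
  have h2 : Finsupp.mapDomain dblo (negP v) (2 * s) = 0 := by
    rw [Finsupp.mapDomain_notin_range]
    intro ⟨s', hsk⟩; simp [dblo] at hsk; omega
  omega

lemma spread_odd (v : FF) (s : ℕ) : spread v (2 * s + 1) = max (-(v s)) 0 := by
  rw [spread, Finsupp.add_apply]
  have h1 : Finsupp.mapDomain dbl (posP v) (2 * s + 1) = 0 := by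
    rw [Finsupp.mapDomain_notin_range]
    intro ⟨s', hsk⟩; simp [dbl] at hsk; omega
  have h2 : Finsupp.mapDomain dblo (negP v) (2 * s + 1) = max (-(v s)) 0 := by
    have : 2 * s + 1 = dblo s := rfl
    rw [this, Finsupp.mapDomain_apply dblo_inj, negP_apply]
  omega

/-- the identity as a linear combination of singles -/
lemma lc_single_one : Finsupp.linearCombination ℤ (fun s : ℕ => Finsupp.single s (1:ℤ))
    = LinearMap.id := by
  apply Finsupp.lhom_ext
  intro a b
  rw [Finsupp.linearCombination_single]
  simp [Finsupp.smul_single]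

/-- the folding map q : e_{2t} ↦ x_t, e_{2t+1} ↦ -x_t -/
noncomputable def qmap : FF →ₗ[ℤ] FF :=
  Finsupp.linearCombination ℤ (fun k : ℕ =>
    if k % 2 = 0 then Finsupp.single (k / 2) (1:ℤ) else -Finsupp.single (k / 2) (1:ℤ))

lemma qmap_single_even (t : ℕ) : qmap (Finsupp.single (2 * t) (1:ℤ)) = Finsupp.single t 1 := by
  rw [qmap, Finsupp.linearCombination_single]
  have h1 : (2 * t) % 2 = 0 := by omega
  have h2 : (2 * t) / 2 = t := by omega
  simp [h1, h2]

lemma qmap_single_odd (t : ℕ) : qmap (Finsupp.single (2 * t + 1) (1:ℤ)) = -Finsupp.single t 1 := by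
  rw [qmap, Finsupp.linearCombination_single]
  have h1 : ¬((2 * t + 1) % 2 = 0) := by omega
  have h2 : (2 * t + 1) / 2 = t := by omega
  simp [h1, h2]

lemma qmap_mapDomain_dbl (c : FF) : qmap (Finsupp.mapDomain dbl c) = c := by
  rw [qmap, Finsupp.linearCombination_mapDomain]
  have : ((fun k : ℕ =>
      if k % 2 = 0 then Finsupp.single (k / 2) (1:ℤ) else -Finsupp.single (k / 2) (1:ℤ)) ∘ dbl)
      = fun s : ℕ => Finsupp.single s (1:ℤ) := by
    funext s
    have h1 : (dbl s) % 2 = 0 := by unfold dbl; omega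
    have h2 : (dbl s) / 2 = s := by unfold dbl; omega
    simp [h1, h2]
  rw [this, lc_single_one]; rfl

lemma qmap_mapDomain_dblo (c : FF) : qmap (Finsupp.mapDomain dblo c) = -c := by
  rw [qmap, Finsupp.linearCombination_mapDomain]
  have : ((fun k : ℕ =>
      if k % 2 = 0 then Finsupp.single (k / 2) (1:ℤ) else -Finsupp.single (k / 2) (1:ℤ)) ∘ dblo)
      = fun s : ℕ => -Finsupp.single s (1:ℤ) := by
    funext s
    have h1 : ¬((dblo s) % 2 = 0) := by unfold dblo; omega
    have h2 : (dblo s) / 2 = s := by unfold dblo; omega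
    simp [h1, h2]
  rw [this]
  have hneg : Finsupp.linearCombination ℤ (fun s : ℕ => -Finsupp.single s (1:ℤ))
      = -Finsupp.linearCombination ℤ (fun s : ℕ => Finsupp.single s (1:ℤ)) := by
    apply Finsupp.lhom_ext
    intro a b
    rw [Finsupp.linearCombination_single]
    simp [Finsupp.linearCombination_single]
  rw [hneg, lc_single_one]
  rfl

lemma qmap_surjective : Function.Surjective qmap :=
  fun c => ⟨Finsupp.mapDomain dbl c, qmap_mapDomain_dbl c⟩

lemma qmap_spread (v : FF) : qmap (spread v) = v := by
  rw [spread, map_add, qmap_mapDomain_dbl, qmap_mapDomain_dblo]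
  have := posP_sub_negP v
  linear_combination (norm := abel) this

/-- even-extraction map E : e_{2t} ↦ x_t, e_{2t+1} ↦ 0 -/
noncomputable def emap : FF →ₗ[ℤ] FF :=
  Finsupp.linearCombination ℤ (fun k : ℕ =>
    if k % 2 = 0 then Finsupp.single (k / 2) (1:ℤ) else 0)

lemma emap_single_even (t : ℕ) : emap (Finsupp.single (2 * t) (1:ℤ)) = Finsupp.single t 1 := by
  rw [emap, Finsupp.linearCombination_single]
  have h1 : (2 * t) % 2 = 0 := by omega
  have h2 : (2 * t) / 2 = t := by omega
  simp [h1, h2]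

lemma emap_single_odd (t : ℕ) : emap (Finsupp.single (2 * t + 1) (1:ℤ)) = 0 := by
  rw [emap, Finsupp.linearCombination_single]
  have h1 : ¬((2 * t + 1) % 2 = 0) := by omega
  simp [h1]

lemma emap_mapDomain_dbl (c : FF) : emap (Finsupp.mapDomain dbl c) = c := by
  rw [emap, Finsupp.linearCombination_mapDomain]
  have : ((fun k : ℕ =>
      if k % 2 = 0 then Finsupp.single (k / 2) (1:ℤ) else 0) ∘ dbl)
      = fun s : ℕ => Finsupp.single s (1:ℤ) := by
    funext s
    have h1 : (dbl s) % 2 = 0 := by unfold dbl; omega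
    have h2 : (dbl s) / 2 = s := by unfold dbl; omega
    simp [h1, h2]
  rw [this, lc_single_one]; rfl

lemma emap_surjective : Function.Surjective emap :=
  fun c => ⟨Finsupp.mapDomain dbl c, emap_mapDomain_dbl c⟩



theorem core (G : Type) [AddCommGroup G] [Countable G] :
    ∃ (lab : ℕ → G) (κ : ℕ → FF),
      Function.Surjective (Finsupp.linearCombination ℤ lab) ∧
      LinearIndependent ℤ κ ∧
      Submodule.span ℤ (Set.range κ) = LinearMap.ker (Finsupp.linearCombination ℤ lab) := by
  obtain ⟨u, hu⟩ := exists_surjective_nat G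
  set lab : ℕ → G := fun t => if t % 2 = 0 then u (t / 2) else 0 with hlab
  set p := Finsupp.linearCombination ℤ lab with hp
  set K := LinearMap.ker p with hK
  set KS : ℕ → Submodule ℤ FF :=
    fun n => K ⊓ Finsupp.supported ℤ ℤ (Set.Iio (n + 1)) with hKS
  set In : ℕ → Submodule ℤ ℤ := fun n => Submodule.map (Finsupp.lapply n) (KS n) with hIn
  haveI hprin : ∀ n, (In n).IsPrincipal := fun n => IsPrincipalIdealRing.principal (In n)
  set d : ℕ → ℤ := fun n => Submodule.IsPrincipal.generator (In n) with hd
  have hspan_d : ∀ n, Submodule.span ℤ {d n} = In n :=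
    fun n => Submodule.IsPrincipal.span_singleton_generator (In n)
  have hex : ∀ n, ∃ y : FF, y ∈ KS n ∧ y n = d n := by
    intro n
    have hmem : d n ∈ Submodule.map (Finsupp.lapply n) (KS n) :=
      Submodule.IsPrincipal.generator_mem (In n)
    rcases Submodule.mem_map.mp hmem with ⟨y, hy, hy2⟩
    exact ⟨y, hy, by simpa using hy2⟩
  choose θ hθKS hθd using hex
  have hθK : ∀ n, θ n ∈ K := fun n => (Submodule.mem_inf.mp (hθKS n)).1
  have hθsupp : ∀ n, ∀ k ∈ (θ n).support, k < n + 1 := by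
    intro n k hk
    have := (Submodule.mem_inf.mp (hθKS n)).2
    rw [Finsupp.mem_supported] at this
    exact this hk
  -- odd indices always jump
  have hodd : ∀ i, d (2 * i + 1) ≠ 0 := by
    intro i hd0
    have h1 : Finsupp.single (2 * i + 1) (1 : ℤ) ∈ KS (2 * i + 1) := by
      rw [hKS]
      refine Submodule.mem_inf.mpr ⟨?_, ?_⟩
      · rw [hK, LinearMap.mem_ker, hp, Finsupp.linearCombination_single]
        have : lab (2 * i + 1) = 0 := by
          rw [hlab]; simp only []; rw [if_neg (by omega)]
        rw [this, smul_zero]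
      · rw [Finsupp.mem_supported]
        intro k hk
        have := Finsupp.support_single_subset hk
        simp only [Finset.mem_singleton] at this
        simp [this]
    have h2 : (1 : ℤ) ∈ In (2 * i + 1) :=
      Submodule.mem_map.mpr ⟨_, h1, by simp⟩
    rw [← hspan_d (2 * i + 1), hd0] at h2
    rcases Submodule.mem_span_singleton.mp h2 with ⟨a, ha⟩
    simp at ha
  have Sinf : {n | d n ≠ 0}.Infinite :=
    Set.infinite_of_injective_forall_mem (f := fun i => 2 * i + 1)
      (fun a b h => by dsimp at h; omega) hodd
  set nth := Nat.nth (fun n => d n ≠ 0) with hnth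
  have hnthd : ∀ j, d (nth j) ≠ 0 := fun j => Nat.nth_mem_of_infinite Sinf j
  have hnthmono : StrictMono nth := Nat.nth_strictMono Sinf
  set κ : ℕ → FF := fun j => θ (nth j) with hκ
  refine ⟨lab, κ, ?_, ?_, ?_⟩
  · -- surjectivity
    intro g
    obtain ⟨i, hi⟩ := hu g
    refine ⟨Finsupp.single (2 * i) 1, ?_⟩
    rw [Finsupp.linearCombination_single, one_smul, hlab]
    simp only []
    rw [if_pos (by omega)]
    have : 2 * i / 2 = i := by omega
    rw [this, hi]
  · -- linear independence
    rw [linearIndependent_iff]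
    intro l hl
    by_contra hl0
    have hne : l.support.Nonempty := Finsupp.support_nonempty_iff.mpr hl0
    set jm := l.support.max' hne with hjm
    have hcoord : Finsupp.linearCombination ℤ κ l (nth jm) = 0 := by rw [hl]; rfl
    rw [Finsupp.linearCombination_apply, Finsupp.sum_apply] at hcoord
    rw [Finsupp.sum_eq_single jm
      (fun b hb hbne => ?_) (by simp)] at hcoord
    · have hθnn : θ (nth jm) (nth jm) = d (nth jm) := hθd (nth jm)
      rw [Finsupp.smul_apply, hκ] at hcoord
      simp only [] at hcoord
      rw [hθnn, smul_eq_mul] at hcoord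
      rcases mul_eq_zero.mp hcoord with h | h
      · exact Finsupp.mem_support_iff.mp (l.support.max'_mem hne) h
      · exact hnthd jm h
    · -- off-maximal terms vanish
      have hbmem : b ∈ l.support := Finsupp.mem_support_iff.mpr hb
      have hblt : b < jm := lt_of_le_of_ne (l.support.le_max' b hbmem) hbne
      have : nth b < nth jm := hnthmono hblt
      rw [Finsupp.smul_apply, hκ]
      simp only []
      have : θ (nth b) (nth jm) = 0 := by
        by_contra hne0
        have := hθsupp (nth b) (nth jm) (Finsupp.mem_support_iff.mpr hne0)
        omega
      rw [this, smul_zero]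
  · -- span = kernel
    apply le_antisymm
    · rw [Submodule.span_le]
      rintro x ⟨j, rfl⟩
      exact hθK (nth j)
    · intro v hv
      have main : ∀ n, ∀ w : FF, w ∈ K → (∀ k ∈ w.support, k < n) →
          w ∈ Submodule.span ℤ (Set.range κ) := by
        intro n
        induction n with
        | zero =>
          intro w _ hsupp
          have : w = 0 := by
            ext k
            by_contra hk
            exact absurd (hsupp k (Finsupp.mem_support_iff.mpr hk)) (by omega)
          rw [this]; exact Submodule.zero_mem _
        | succ n ih =>
          intro w hwK hsupp
          have hwKS : w ∈ KS n := by
            rw [hKS]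
            refine Submodule.mem_inf.mpr ⟨hwK, ?_⟩
            rw [Finsupp.mem_supported]
            intro k hk
            exact hsupp k hk
          have hwIn : w n ∈ In n :=
            Submodule.mem_map.mpr ⟨w, hwKS, by simp⟩
          rw [← hspan_d n] at hwIn
          rcases Submodule.mem_span_singleton.mp hwIn with ⟨c, hc⟩
          by_cases hdn : d n = 0
          · have hwn : w n = 0 := by rw [← hc, hdn, smul_zero]
            apply ih w hwK
            intro k hk
            have h1 := hsupp k hk
            have h2 : k ≠ n := by
              intro hkn
              exact Finsupp.mem_support_iff.mp hk (hkn ▸ hwn)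
            omega
          · obtain ⟨j, hj⟩ : ∃ j, nth j = n := by
              have : n ∈ Set.range nth := by
                rw [hnth, Nat.range_nth_of_infinite Sinf]
                exact hdn
              exact this
            set w' := w - c • θ n with hw'
            have hw'K : w' ∈ K := sub_mem hwK (Submodule.smul_mem _ _ (hθK n))
            have hw'supp : ∀ k ∈ w'.support, k < n := by
              intro k hk
              have hk1 : k < n + 1 := by
                have hk2 := Finsupp.support_sub hk
                rcases Finset.mem_union.mp hk2 with h | h
                · exact hsupp k h
                · exact hθsupp n k (Finsupp.support_smul h)
              have hkn : k ≠ n := by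
                intro hkeq
                apply Finsupp.mem_support_iff.mp hk
                have hval : w' n = w n - c • d n := by
                  rw [hw', Finsupp.sub_apply, Finsupp.smul_apply, hθd n]
                rw [hkeq, hval, ← hc, sub_self]
              omega
            have hmem' := ih w' hw'K hw'supp
            have hrw : w = w' + c • θ n := by rw [hw']; abel
            rw [hrw]
            refine Submodule.add_mem _ hmem' (Submodule.smul_mem _ _ ?_)
            exact Submodule.subset_span ⟨j, by rw [hκ]; simp only []; rw [hj]⟩
      exact main ((v.support.sup id) + 1) v hv
        (fun k hk => by
          have : k ≤ v.support.sup id := Finset.le_sup (f := id) hk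
          omega)


/-! ## Main construction -/

noncomputable def Cp (t : ℕ) : FF := Finsupp.single (2*t) 1 + Finsupp.single (2*t+1) 1

lemma Cp_apply (t k : ℕ) :
    Cp t k = (if 2*t = k then (1:ℤ) else 0) + (if 2*t+1 = k then (1:ℤ) else 0) := by
  rw [Cp, Finsupp.add_apply, Finsupp.single_apply, Finsupp.single_apply]

lemma Cp_nonneg (t k : ℕ) : 0 ≤ Cp t k := by
  rw [Cp_apply]; split_ifs <;> omega

lemma Cp_self (t : ℕ) : Cp t (2*t) = 1 := by
  rw [Cp_apply, if_pos rfl, if_neg (by omega)]; omega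

lemma Cp_self' (t : ℕ) : Cp t (2*t+1) = 1 := by
  rw [Cp_apply, if_neg (by omega), if_pos rfl]; omega

lemma Cp_ne (t k : ℕ) (h1 : k ≠ 2*t) (h2 : k ≠ 2*t+1) : Cp t k = 0 := by
  rw [Cp_apply, if_neg (by omega), if_neg (by omega)]; omega

lemma qmap_Cp (t : ℕ) : qmap (Cp t) = 0 := by
  rw [Cp, map_add, qmap_single_even, qmap_single_odd, add_neg_cancel]

lemma emap_Cp (t : ℕ) : emap (Cp t) = Finsupp.single t 1 := by
  rw [Cp, map_add, emap_single_even, emap_single_odd, add_zero]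

noncomputable def addF (κ1 : ℕ → FF) (t : ℕ) : Finset ℕ :=
  ((κ1 t).support.erase t ∪ {t+1}) ∪ (if t = 0 then ∅ else {t-1})

lemma addF_not_self (κ1 : ℕ → FF) (t : ℕ) : t ∉ addF κ1 t := by
  rw [addF]
  intro h
  rcases Finset.mem_union.mp h with h | h
  · rcases Finset.mem_union.mp h with h | h
    · exact (Finset.notMem_erase t _) h
    · simp at h
  · split_ifs at h with h0
    · simp at h
    · simp at h; omega

lemma addF_succ (κ1 : ℕ → FF) (t : ℕ) : t + 1 ∈ addF κ1 t := by
  rw [addF]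
  exact Finset.mem_union_left _ (Finset.mem_union_right _ (by simp))

lemma addF_pred (κ1 : ℕ → FF) (t : ℕ) : t ∈ addF κ1 (t+1) := by
  rw [addF]
  apply Finset.mem_union_right
  rw [if_neg (by omega)]
  simp

lemma addF_suppκ (κ1 : ℕ → FF) (t s : ℕ) (hs : κ1 t s ≠ 0) (hst : s ≠ t) :
    s ∈ addF κ1 t := by
  rw [addF]
  apply Finset.mem_union_left
  apply Finset.mem_union_left
  exact Finset.mem_erase.mpr ⟨hst, Finsupp.mem_support_iff.mpr hs⟩

noncomputable def Rodd (κ0 κ1 : ℕ → FF) (t : ℕ) : FF :=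
  Cp t + spread (κ0 t) + ∑ s ∈ addF κ1 t, Cp s

lemma Rodd_nonneg (κ0 κ1 : ℕ → FF) (t k : ℕ) : 0 ≤ Rodd κ0 κ1 t k := by
  rw [Rodd, Finsupp.add_apply, Finsupp.add_apply]
  have h3 : 0 ≤ (∑ s ∈ addF κ1 t, Cp s) k := by
    rw [Finsupp.finset_sum_apply]
    exact Finset.sum_nonneg fun s _ => Cp_nonneg s k
  have := Cp_nonneg t k
  have := spread_nonneg (κ0 t) k
  omega

lemma qmap_Rodd (κ0 κ1 : ℕ → FF) (t : ℕ) : qmap (Rodd κ0 κ1 t) = κ0 t := by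
  rw [Rodd, map_add, map_add, qmap_Cp, qmap_spread, map_sum]
  have : ∀ s ∈ addF κ1 t, qmap (Cp s) = 0 := fun s _ => qmap_Cp s
  rw [Finset.sum_congr rfl this, Finset.sum_const_zero, zero_add, add_zero]

noncomputable def Rcol (κ0 κ1 : ℕ → FF) (l : ℕ) : FF :=
  if l % 2 = 0 then Cp (l/2) else Rodd κ0 κ1 (l/2)

lemma Rcol_nonneg (κ0 κ1 : ℕ → FF) (l k : ℕ) : 0 ≤ Rcol κ0 κ1 l k := by
  rw [Rcol]; split_ifs
  · exact Cp_nonneg _ _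
  · exact Rodd_nonneg _ _ _ _

noncomputable def Ncol (κ0 κ1 : ℕ → FF) (l : ℕ) : FF :=
  Finsupp.single l 1 + Rcol κ0 κ1 l

noncomputable def Nmat (κ0 κ1 : ℕ → FF) : ℕ → ℕ → ℤ := fun k l => Ncol κ0 κ1 l k

noncomputable def Mcol (κ1 : ℕ → FF) (l : ℕ) : FF :=
  if l % 2 = 0 then Finsupp.single l 1 + Finsupp.single (l+1) 1
  else Finsupp.single l 1 + Finsupp.mapDomain dbl (κ1 (l/2))

noncomputable def Mmat (κ1 : ℕ → FF) : ℕ → ℕ → ℤ := fun k l => Mcol κ1 l k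

/-! ### column finiteness and matCol computation -/

lemma colFin_of_finsupp (f : ℕ → ℕ → ℤ) (g : ℕ → FF) (h : ∀ k l, f k l = g l k) :
    ColFin f := by
  intro l
  apply Set.Finite.subset (g l).support.finite_toSet
  intro k hk
  rw [Function.mem_support, h k l] at hk
  exact Finset.mem_coe.mpr (Finsupp.mem_support_iff.mpr hk)

lemma matCol_eq (A : ℕ → ℕ → ℤ) (h : ColFin A) (l : ℕ) (v : FF)
    (hv : ∀ k, A k l = v k) : matCol A l = v := by
  ext k
  rw [matCol, dif_pos (h l)]
  exact hv k

lemma idMat_apply (k l : ℕ) : idMat ℕ k l = (Finsupp.single l (1:ℤ)) k := by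
  rw [idMat, Finsupp.single_apply]
  by_cases h : k = l
  · rw [if_pos h, if_pos h.symm]
  · rw [if_neg h, if_neg (fun hh => h hh.symm)]

lemma matCol_sub (col : ℕ → FF) (l : ℕ) :
    matCol (fun k l => idMat ℕ k l - col l k) l = Finsupp.single l 1 - col l := by
  apply matCol_eq
  · apply colFin_of_finsupp _ (fun l => Finsupp.single l 1 - col l)
    intro k l
    rw [Finsupp.sub_apply, idMat_apply]
  · intro k
    rw [Finsupp.sub_apply, idMat_apply]

lemma matCol_N (κ0 κ1 : ℕ → FF) (l : ℕ) :
    matCol (fun k l => idMat ℕ k l - Nmat κ0 κ1 k l) l = -(Rcol κ0 κ1 l) := by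
  rw [show (fun k l => idMat ℕ k l - Nmat κ0 κ1 k l)
        = (fun k l => idMat ℕ k l - (Ncol κ0 κ1 l) k) from rfl,
      matCol_sub (Ncol κ0 κ1) l, Ncol]
  abel

noncomputable def MrelCol (κ1 : ℕ → FF) (l : ℕ) : FF :=
  if l % 2 = 0 then Finsupp.single (l+1) 1 else Finsupp.mapDomain dbl (κ1 (l/2))

lemma matCol_M (κ1 : ℕ → FF) (l : ℕ) :
    matCol (fun k l => idMat ℕ k l - Mmat κ1 k l) l = -(MrelCol κ1 l) := by
  rw [show (fun k l => idMat ℕ k l - Mmat κ1 k l)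
        = (fun k l => idMat ℕ k l - (Mcol κ1 l) k) from rfl,
      matCol_sub (Mcol κ1) l, Mcol, MrelCol]
  split_ifs <;> abel

/-! ### negation of a family spans the same submodule -/

lemma span_range_neg (v : ℕ → FF) :
    Submodule.span ℤ (Set.range (fun l => -(v l))) = Submodule.span ℤ (Set.range v) := by
  apply le_antisymm
  · rw [Submodule.span_le]
    rintro x ⟨l, rfl⟩
    exact Submodule.neg_mem _ (Submodule.subset_span ⟨l, rfl⟩)
  · rw [Submodule.span_le]
    rintro x ⟨l, rfl⟩
    rw [show v l = -(-(v l)) from (neg_neg _).symm]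
    exact Submodule.neg_mem _ (Submodule.subset_span ⟨l, rfl⟩)

lemma lc_neg (v : ℕ → FF) :
    Finsupp.linearCombination ℤ (fun l => -(v l)) = -(Finsupp.linearCombination ℤ v) := by
  apply Finsupp.lhom_ext
  intro a b
  rw [Finsupp.linearCombination_single, LinearMap.neg_apply, Finsupp.linearCombination_single,
    smul_neg]

/-! ### decomposition identities -/

noncomputable def omap : FF →ₗ[ℤ] FF :=
  Finsupp.linearCombination ℤ (fun k : ℕ =>
    if k % 2 = 0 then 0 else Finsupp.single (k / 2) (1:ℤ))

noncomputable def CpL : FF →ₗ[ℤ] FF := Finsupp.linearCombination ℤ Cp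

noncomputable def oddSL : FF →ₗ[ℤ] FF :=
  Finsupp.linearCombination ℤ (fun t : ℕ => Finsupp.single (2*t+1) (1:ℤ))

lemma decomp_q (w : FF) :
    w - CpL (emap w) = -((Finsupp.lmapDomain ℤ ℤ dblo).comp qmap w) := by
  have key : (LinearMap.id - CpL.comp emap : FF →ₗ[ℤ] FF)
      = -((Finsupp.lmapDomain ℤ ℤ dblo).comp qmap) := by
    apply Finsupp.lhom_ext
    intro a b
    simp only [LinearMap.sub_apply, LinearMap.id_apply, LinearMap.comp_apply,
      LinearMap.neg_apply]
    rw [emap, qmap, Finsupp.linearCombination_single, Finsupp.linearCombination_single]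
    by_cases ha : a % 2 = 0
    · obtain ⟨s, rfl⟩ : ∃ s, a = 2*s := ⟨a/2, by omega⟩
      have h2 : 2*s/2 = s := by omega
      rw [if_pos ha, if_pos ha, h2, map_smul, CpL, Finsupp.linearCombination_single,
        one_smul, map_smul, Finsupp.lmapDomain_apply, Finsupp.mapDomain_single]
      rw [show dblo s = 2*s+1 from rfl, Cp, smul_add]
      simp only [Finsupp.smul_single, smul_eq_mul, mul_one]
      abel
    · obtain ⟨s, rfl⟩ : ∃ s, a = 2*s+1 := ⟨a/2, by omega⟩
      have h2 : (2*s+1)/2 = s := by omega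
      rw [if_neg ha, if_neg ha, h2, smul_zero, map_zero, sub_zero, smul_neg, map_neg,
        map_smul, Finsupp.lmapDomain_apply, Finsupp.mapDomain_single, neg_neg,
        Finsupp.smul_single]
      simp only [smul_eq_mul, mul_one]
      rw [show dblo s = 2*s+1 from rfl]
  have := congrArg (fun (f : FF →ₗ[ℤ] FF) => f w) key
  simpa using this

lemma decomp_e (w : FF) :
    w - oddSL (omap w) = (Finsupp.lmapDomain ℤ ℤ dbl).comp emap w := by
  have key : (LinearMap.id - oddSL.comp omap : FF →ₗ[ℤ] FF)
      = (Finsupp.lmapDomain ℤ ℤ dbl).comp emap := by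
    apply Finsupp.lhom_ext
    intro a b
    simp only [LinearMap.sub_apply, LinearMap.id_apply, LinearMap.comp_apply]
    rw [omap, emap, Finsupp.linearCombination_single, Finsupp.linearCombination_single]
    by_cases ha : a % 2 = 0
    · obtain ⟨s, rfl⟩ : ∃ s, a = 2*s := ⟨a/2, by omega⟩
      have h2 : 2*s/2 = s := by omega
      rw [if_pos ha, if_pos ha, h2, smul_zero, map_zero, sub_zero, map_smul,
        Finsupp.lmapDomain_apply, Finsupp.mapDomain_single, Finsupp.smul_single]
      simp only [smul_eq_mul, mul_one]
      rw [show dbl s = 2*s from rfl]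
    · obtain ⟨s, rfl⟩ : ∃ s, a = 2*s+1 := ⟨a/2, by omega⟩
      have h2 : (2*s+1)/2 = s := by omega
      rw [if_neg ha, if_neg ha, h2, smul_zero, map_zero, map_smul, oddSL,
        Finsupp.linearCombination_single, one_smul, Finsupp.smul_single]
      simp only [smul_eq_mul, mul_one]
      rw [sub_self]
  have := congrArg (fun (f : FF →ₗ[ℤ] FF) => f w) key
  simpa using this

lemma ker_q_sub_span (w : FF) (hw : qmap w = 0) :
    w ∈ Submodule.span ℤ (Set.range Cp) := by
  have h := decomp_q w
  rw [LinearMap.comp_apply, hw] at h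
  simp only [map_zero, neg_zero] at h
  have hw2 : w = CpL (emap w) := sub_eq_zero.mp h
  rw [hw2, CpL, ← Finsupp.range_linearCombination]
  exact ⟨emap w, rfl⟩

lemma ker_e_sub_span (w : FF) (hw : emap w = 0) :
    w ∈ Submodule.span ℤ (Set.range (fun t : ℕ => Finsupp.single (2*t+1) (1:ℤ))) := by
  have h := decomp_e w
  rw [LinearMap.comp_apply, hw] at h
  simp only [map_zero] at h
  have hw2 : w = oddSL (omap w) := sub_eq_zero.mp h
  rw [hw2, oddSL, ← Finsupp.range_linearCombination]
  exact ⟨omap w, rfl⟩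

/-! ### injectivity -/

lemma filter_split (c : FF) :
    c.filter (fun l => l % 2 = 0) + c.filter (fun l => ¬ (l % 2 = 0)) = c := by
  ext k
  rw [Finsupp.add_apply, Finsupp.filter_apply, Finsupp.filter_apply]
  by_cases h : k % 2 = 0
  · rw [if_pos h, if_neg (fun hh => hh h)]; ring
  · rw [if_neg h, if_pos h]; ring

lemma mem_filter_even {c : FF} {l : ℕ} (hl : l ∈ (c.filter (fun l => l % 2 = 0)).support) :
    l % 2 = 0 := by
  rw [Finsupp.support_filter, Finset.mem_filter] at hl
  exact hl.2

lemma mem_filter_odd {c : FF} {l : ℕ} (hl : l ∈ (c.filter (fun l => ¬ (l % 2 = 0))).support) :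
    ¬ (l % 2 = 0) := by
  rw [Finsupp.support_filter, Finset.mem_filter] at hl
  exact hl.2

lemma lc_congr_support (v w : ℕ → FF) (c : FF) (h : ∀ l ∈ c.support, v l = w l) :
    Finsupp.linearCombination ℤ v c = Finsupp.linearCombination ℤ w c := by
  rw [Finsupp.linearCombination_apply, Finsupp.linearCombination_apply]
  exact Finsupp.sum_congr (fun l hl => by rw [h l hl])

lemma lc_zero_support (v : ℕ → FF) (c : FF) (h : ∀ l ∈ c.support, v l = 0) :
    Finsupp.linearCombination ℤ v c = 0 := by
  rw [Finsupp.linearCombination_apply, Finsupp.sum]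
  exact Finset.sum_eq_zero (fun l hl => by rw [h l hl, smul_zero])

lemma mapDomain_half_zero (c : FF) (hsupp : ∀ l ∈ c.support, ¬ (l % 2 = 0))
    (h : Finsupp.mapDomain (fun l : ℕ => l / 2) c = 0) : c = 0 := by
  ext l
  by_cases hl : l % 2 = 0
  · by_contra hne
    exact hsupp l (Finsupp.mem_support_iff.mpr hne) hl
  · have key := Finsupp.mapDomain_apply' {x : ℕ | ¬ (x % 2 = 0)}
      (f := fun l : ℕ => l / 2) c
      (fun x hx => hsupp x hx)
      (fun a ha b hb hab => by
        simp only [Set.mem_setOf_eq] at ha hb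
        dsimp at hab
        omega)
      (show l ∈ {x : ℕ | ¬ (x % 2 = 0)} from hl)
    rw [h] at key
    rw [← key]
    rfl

lemma qmap_Rcol_even (κ0 κ1 : ℕ → FF) {l : ℕ} (h : l % 2 = 0) :
    qmap (Rcol κ0 κ1 l) = 0 := by
  rw [Rcol, if_pos h, qmap_Cp]

lemma qmap_Rcol_odd (κ0 κ1 : ℕ → FF) {l : ℕ} (h : ¬ (l % 2 = 0)) :
    qmap (Rcol κ0 κ1 l) = κ0 (l / 2) := by
  rw [Rcol, if_neg h, qmap_Rodd]

lemma N_inj (κ0 κ1 : ℕ → FF) (hκ0 : LinearIndependent ℤ κ0) :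
    Function.Injective ⇑(matHom (fun k l => idMat ℕ k l - Nmat κ0 κ1 k l)) := by
  have key : ∀ c : FF, matHom (fun k l => idMat ℕ k l - Nmat κ0 κ1 k l) c = 0 → c = 0 := by
    intro c hc
    rw [matHom] at hc
    have hcols : matCol (fun k l => idMat ℕ k l - Nmat κ0 κ1 k l)
        = fun l => -(Rcol κ0 κ1 l) := funext (matCol_N κ0 κ1)
    rw [hcols, lc_neg] at hc
    have h1 : Finsupp.linearCombination ℤ (Rcol κ0 κ1) c = 0 := by
      rwa [LinearMap.neg_apply, neg_eq_zero] at hc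
    set cE := c.filter (fun l => l % 2 = 0) with hcE
    set cO := c.filter (fun l => ¬ (l % 2 = 0)) with hcO
    have hsplit : cE + cO = c := filter_split c
    have h2 : Finsupp.linearCombination ℤ (Rcol κ0 κ1) cE
        + Finsupp.linearCombination ℤ (Rcol κ0 κ1) cO = 0 := by
      rw [← map_add, hsplit]; exact h1
    have h3 : qmap (Finsupp.linearCombination ℤ (Rcol κ0 κ1) cE) = 0 := by
      rw [Finsupp.apply_linearCombination]
      exact lc_zero_support _ _ (fun l hl => qmap_Rcol_even κ0 κ1 (mem_filter_even hl))
    have h4 : qmap (Finsupp.linearCombination ℤ (Rcol κ0 κ1) cO)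
        = Finsupp.linearCombination ℤ κ0 (Finsupp.mapDomain (fun l : ℕ => l / 2) cO) := by
      rw [Finsupp.apply_linearCombination, Finsupp.linearCombination_mapDomain]
      exact lc_congr_support _ _ _
        (fun l hl => qmap_Rcol_odd κ0 κ1 (mem_filter_odd hl))
    have h5 : Finsupp.linearCombination ℤ κ0 (Finsupp.mapDomain (fun l : ℕ => l / 2) cO)
        = 0 := by
      have hq := congrArg (fun w => qmap w) h2
      simpa [map_add, h3, h4] using hq
    have h6 : Finsupp.mapDomain (fun l : ℕ => l / 2) cO = 0 :=
      linearIndependent_iff.mp hκ0 _ h5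
    have h7 : cO = 0 := mapDomain_half_zero cO (fun l hl => mem_filter_odd hl) h6
    have h8 : Finsupp.linearCombination ℤ (Rcol κ0 κ1) cE = 0 := by
      rw [h7, map_zero, add_zero] at h2; exact h2
    have h9 : cE = 0 := by
      ext l
      by_cases hl : l % 2 = 0
      · obtain ⟨t, rfl⟩ : ∃ t, l = 2 * t := ⟨l / 2, by omega⟩
        have hcoord : Finsupp.linearCombination ℤ (Rcol κ0 κ1) cE (2*t) = 0 := by
          rw [h8]; rfl
        rw [lc_apply] at hcoord
        have hsum : cE.sum (fun l a => a * Rcol κ0 κ1 l (2*t))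
            = cE (2*t) * Rcol κ0 κ1 (2*t) (2*t) := by
          apply Finsupp.sum_eq_single
          · intro b hb hbne
            have hbeven : b % 2 = 0 := mem_filter_even (Finsupp.mem_support_iff.mpr hb)
            rw [Rcol, if_pos hbeven, Cp_ne (b/2) (2*t) (by omega) (by omega), mul_zero]
          · intro _; rw [zero_mul]
        rw [hsum] at hcoord
        have ht2 : (2*t) % 2 = 0 := by omega
        have ht3 : (2*t) / 2 = t := by omega
        rw [Rcol, if_pos ht2, ht3, Cp_self, mul_one] at hcoord
        rw [hcoord]; rfl
      · rw [hcE, Finsupp.filter_apply, if_neg hl]; rfl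
    rw [← hsplit, h7, h9, add_zero]
  intro x y hxy
  have := key (x - y) (by rw [map_sub, hxy, sub_self])
  exact sub_eq_zero.mp this

lemma emap_MrelCol_even (κ1 : ℕ → FF) {l : ℕ} (h : l % 2 = 0) :
    emap (MrelCol κ1 l) = 0 := by
  obtain ⟨t, rfl⟩ : ∃ t, l = 2 * t := ⟨l / 2, by omega⟩
  rw [MrelCol, if_pos h]
  exact emap_single_odd t

lemma emap_MrelCol_odd (κ1 : ℕ → FF) {l : ℕ} (h : ¬ (l % 2 = 0)) :
    emap (MrelCol κ1 l) = κ1 (l / 2) := by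
  rw [MrelCol, if_neg h]
  exact emap_mapDomain_dbl (κ1 (l / 2))

lemma M_inj (κ1 : ℕ → FF) (hκ1 : LinearIndependent ℤ κ1) :
    Function.Injective ⇑(matHom (fun k l => idMat ℕ k l - Mmat κ1 k l)) := by
  have key : ∀ c : FF, matHom (fun k l => idMat ℕ k l - Mmat κ1 k l) c = 0 → c = 0 := by
    intro c hc
    rw [matHom] at hc
    have hcols : matCol (fun k l => idMat ℕ k l - Mmat κ1 k l)
        = fun l => -(MrelCol κ1 l) := funext (matCol_M κ1)
    rw [hcols, lc_neg] at hc
    have h1 : Finsupp.linearCombination ℤ (MrelCol κ1) c = 0 := by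
      rwa [LinearMap.neg_apply, neg_eq_zero] at hc
    set cE := c.filter (fun l => l % 2 = 0) with hcE
    set cO := c.filter (fun l => ¬ (l % 2 = 0)) with hcO
    have hsplit : cE + cO = c := filter_split c
    have h2 : Finsupp.linearCombination ℤ (MrelCol κ1) cE
        + Finsupp.linearCombination ℤ (MrelCol κ1) cO = 0 := by
      rw [← map_add, hsplit]; exact h1
    have h3 : emap (Finsupp.linearCombination ℤ (MrelCol κ1) cE) = 0 := by
      rw [Finsupp.apply_linearCombination]
      exact lc_zero_support _ _ (fun l hl => emap_MrelCol_even κ1 (mem_filter_even hl))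
    have h4 : emap (Finsupp.linearCombination ℤ (MrelCol κ1) cO)
        = Finsupp.linearCombination ℤ κ1 (Finsupp.mapDomain (fun l : ℕ => l / 2) cO) := by
      rw [Finsupp.apply_linearCombination, Finsupp.linearCombination_mapDomain]
      exact lc_congr_support _ _ _
        (fun l hl => emap_MrelCol_odd κ1 (mem_filter_odd hl))
    have h5 : Finsupp.linearCombination ℤ κ1 (Finsupp.mapDomain (fun l : ℕ => l / 2) cO)
        = 0 := by
      have hq := congrArg (fun w => emap w) h2
      simpa [map_add, h3, h4] using hq
    have h6 : Finsupp.mapDomain (fun l : ℕ => l / 2) cO = 0 :=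
      linearIndependent_iff.mp hκ1 _ h5
    have h7 : cO = 0 := mapDomain_half_zero cO (fun l hl => mem_filter_odd hl) h6
    have h8 : Finsupp.linearCombination ℤ (MrelCol κ1) cE = 0 := by
      rw [h7, map_zero, add_zero] at h2; exact h2
    have h9 : cE = 0 := by
      ext l
      by_cases hl : l % 2 = 0
      · obtain ⟨t, rfl⟩ : ∃ t, l = 2 * t := ⟨l / 2, by omega⟩
        have hcoord : Finsupp.linearCombination ℤ (MrelCol κ1) cE (2*t+1) = 0 := by
          rw [h8]; rfl
        rw [lc_apply] at hcoord
        have hsum : cE.sum (fun l a => a * MrelCol κ1 l (2*t+1))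
            = cE (2*t) * MrelCol κ1 (2*t) (2*t+1) := by
          apply Finsupp.sum_eq_single
          · intro b hb hbne
            have hbeven : b % 2 = 0 := mem_filter_even (Finsupp.mem_support_iff.mpr hb)
            rw [MrelCol, if_pos hbeven, Finsupp.single_apply, if_neg (by omega), mul_zero]
          · intro _; rw [zero_mul]
        rw [hsum] at hcoord
        have ht2 : (2*t) % 2 = 0 := by omega
        rw [MrelCol, if_pos ht2, Finsupp.single_apply, if_pos rfl, mul_one] at hcoord
        rw [hcoord]; rfl
      · rw [hcE, Finsupp.filter_apply, if_neg hl]; rfl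
    rw [← hsplit, h7, h9, add_zero]
  intro x y hxy
  have := key (x - y) (by rw [map_sub, hxy, sub_self])
  exact sub_eq_zero.mp this

/-! ### cokernel computation -/

lemma qmap_lc_Rodd (κ0 κ1 : ℕ → FF) (dd : FF) :
    qmap (Finsupp.linearCombination ℤ (Rodd κ0 κ1) dd)
      = Finsupp.linearCombination ℤ κ0 dd := by
  rw [Finsupp.apply_linearCombination]
  exact lc_congr_support _ _ _ (fun t _ => qmap_Rodd κ0 κ1 t)

lemma N_range_eq {G : Type} [AddCommGroup G] (lab0 : ℕ → G) (κ0 κ1 : ℕ → FF)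
    (hspan : Submodule.span ℤ (Set.range κ0)
      = LinearMap.ker (Finsupp.linearCombination ℤ lab0)) :
    LinearMap.range (matHom (fun k l => idMat ℕ k l - Nmat κ0 κ1 k l))
      = LinearMap.ker ((Finsupp.linearCombination ℤ lab0).comp qmap) := by
  rw [matHom]
  have hcols : matCol (fun k l => idMat ℕ k l - Nmat κ0 κ1 k l)
      = fun l => -(Rcol κ0 κ1 l) := funext (matCol_N κ0 κ1)
  rw [hcols, Finsupp.range_linearCombination, span_range_neg]
  apply le_antisymm
  · rw [Submodule.span_le]
    rintro x ⟨l, rfl⟩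
    rw [SetLike.mem_coe, LinearMap.mem_ker, LinearMap.comp_apply]
    by_cases hl : l % 2 = 0
    · rw [qmap_Rcol_even κ0 κ1 hl, map_zero]
    · rw [qmap_Rcol_odd κ0 κ1 hl]
      have hmem : κ0 (l/2) ∈ LinearMap.ker (Finsupp.linearCombination ℤ lab0) := by
        rw [← hspan]; exact Submodule.subset_span ⟨l/2, rfl⟩
      exact hmem
  · intro v hv
    rw [LinearMap.mem_ker, LinearMap.comp_apply] at hv
    have hqv : qmap v ∈ Submodule.span ℤ (Set.range κ0) := by
      rw [hspan]; exact hv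
    rcases Finsupp.mem_span_range_iff_exists_finsupp.mp hqv with ⟨dd, hdd⟩
    have hdd' : Finsupp.linearCombination ℤ κ0 dd = qmap v := by
      rw [Finsupp.linearCombination_apply]; exact hdd
    set w := v - Finsupp.linearCombination ℤ (Rodd κ0 κ1) dd with hw
    have hqw : qmap w = 0 := by
      rw [hw, map_sub, qmap_lc_Rodd, hdd', sub_self]
    have hwspan := ker_q_sub_span w hqw
    have hCp : Submodule.span ℤ (Set.range Cp)
        ≤ Submodule.span ℤ (Set.range (Rcol κ0 κ1)) := by
      rw [Submodule.span_le]
      rintro x ⟨t, rfl⟩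
      apply Submodule.subset_span
      refine ⟨2*t, ?_⟩
      rw [Rcol, if_pos (by omega), show 2*t/2 = t by omega]
    have hRodd : Finsupp.linearCombination ℤ (Rodd κ0 κ1) dd
        ∈ Submodule.span ℤ (Set.range (Rcol κ0 κ1)) := by
      rw [Finsupp.linearCombination_apply, Finsupp.sum]
      apply Submodule.sum_mem
      intro t _
      apply Submodule.smul_mem
      apply Submodule.subset_span
      refine ⟨2*t+1, ?_⟩
      rw [Rcol, if_neg (by omega), show (2*t+1)/2 = t by omega]
    have hvrw : v = w + Finsupp.linearCombination ℤ (Rodd κ0 κ1) dd := by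
      rw [hw]; abel
    rw [hvrw]
    exact Submodule.add_mem _ (hCp hwspan) hRodd

lemma emap_lc_Mlift (κ1 : ℕ → FF) (dd : FF) :
    emap (Finsupp.linearCombination ℤ (fun t => Finsupp.mapDomain dbl (κ1 t)) dd)
      = Finsupp.linearCombination ℤ κ1 dd := by
  rw [Finsupp.apply_linearCombination]
  exact lc_congr_support _ _ _ (fun t _ => emap_mapDomain_dbl (κ1 t))

lemma M_range_eq {G : Type} [AddCommGroup G] (lab1 : ℕ → G) (κ1 : ℕ → FF)
    (hspan : Submodule.span ℤ (Set.range κ1)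
      = LinearMap.ker (Finsupp.linearCombination ℤ lab1)) :
    LinearMap.range (matHom (fun k l => idMat ℕ k l - Mmat κ1 k l))
      = LinearMap.ker ((Finsupp.linearCombination ℤ lab1).comp emap) := by
  rw [matHom]
  have hcols : matCol (fun k l => idMat ℕ k l - Mmat κ1 k l)
      = fun l => -(MrelCol κ1 l) := funext (matCol_M κ1)
  rw [hcols, Finsupp.range_linearCombination, span_range_neg]
  apply le_antisymm
  · rw [Submodule.span_le]
    rintro x ⟨l, rfl⟩
    rw [SetLike.mem_coe, LinearMap.mem_ker, LinearMap.comp_apply]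
    by_cases hl : l % 2 = 0
    · rw [emap_MrelCol_even κ1 hl, map_zero]
    · rw [emap_MrelCol_odd κ1 hl]
      have hmem : κ1 (l/2) ∈ LinearMap.ker (Finsupp.linearCombination ℤ lab1) := by
        rw [← hspan]; exact Submodule.subset_span ⟨l/2, rfl⟩
      exact hmem
  · intro v hv
    rw [LinearMap.mem_ker, LinearMap.comp_apply] at hv
    have hqv : emap v ∈ Submodule.span ℤ (Set.range κ1) := by
      rw [hspan]; exact hv
    rcases Finsupp.mem_span_range_iff_exists_finsupp.mp hqv with ⟨dd, hdd⟩
    have hdd' : Finsupp.linearCombination ℤ κ1 dd = emap v := by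
      rw [Finsupp.linearCombination_apply]; exact hdd
    set w := v - Finsupp.linearCombination ℤ
      (fun t => Finsupp.mapDomain dbl (κ1 t)) dd with hw
    have hqw : emap w = 0 := by
      rw [hw, map_sub, emap_lc_Mlift, hdd', sub_self]
    have hwspan := ker_e_sub_span w hqw
    have hOdd : Submodule.span ℤ (Set.range (fun t : ℕ => Finsupp.single (2*t+1) (1:ℤ)))
        ≤ Submodule.span ℤ (Set.range (MrelCol κ1)) := by
      rw [Submodule.span_le]
      rintro x ⟨t, rfl⟩
      apply Submodule.subset_span
      refine ⟨2*t, ?_⟩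
      rw [MrelCol, if_pos (by omega)]
    have hlift : Finsupp.linearCombination ℤ (fun t => Finsupp.mapDomain dbl (κ1 t)) dd
        ∈ Submodule.span ℤ (Set.range (MrelCol κ1)) := by
      rw [Finsupp.linearCombination_apply, Finsupp.sum]
      apply Submodule.sum_mem
      intro t _
      apply Submodule.smul_mem
      apply Submodule.subset_span
      refine ⟨2*t+1, ?_⟩
      rw [MrelCol, if_neg (by omega), show (2*t+1)/2 = t by omega]
    have hvrw : v = w + Finsupp.linearCombination ℤ
        (fun t => Finsupp.mapDomain dbl (κ1 t)) dd := by
      rw [hw]; abel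
    rw [hvrw]
    exact Submodule.add_mem _ (hOdd hwspan) hlift

/-! ### entries of the matrices -/

lemma sum_addF_apply_nonneg (κ1 : ℕ → FF) (t k : ℕ) :
    0 ≤ (∑ s ∈ addF κ1 t, Cp s) k := by
  rw [Finsupp.finset_sum_apply]
  exact Finset.sum_nonneg fun s _ => Cp_nonneg s k

lemma N_nonneg (κ0 κ1 : ℕ → FF) (k l : ℕ) : 0 ≤ Nmat κ0 κ1 k l := by
  rw [Nmat, Ncol, Finsupp.add_apply, Finsupp.single_apply]
  have := Rcol_nonneg κ0 κ1 l k
  split_ifs <;> omega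

lemma N_diag (κ0 κ1 : ℕ → FF) (k : ℕ) : 2 ≤ Nmat κ0 κ1 k k := by
  rw [Nmat, Ncol, Finsupp.add_apply, Finsupp.single_apply, if_pos rfl]
  have h1 : 1 ≤ Rcol κ0 κ1 k k := by
    by_cases hk : k % 2 = 0
    · obtain ⟨t, rfl⟩ : ∃ t, k = 2*t := ⟨k/2, by omega⟩
      rw [Rcol, if_pos hk, show 2*t/2 = t by omega, Cp_self]
    · obtain ⟨t, rfl⟩ : ∃ t, k = 2*t+1 := ⟨k/2, by omega⟩
      rw [Rcol, if_neg hk, show (2*t+1)/2 = t by omega, Rodd,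
        Finsupp.add_apply, Finsupp.add_apply, Cp_self']
      have := spread_nonneg (κ0 t) (2*t+1)
      have := sum_addF_apply_nonneg κ1 t (2*t+1)
      omega
  omega

lemma M_diag (κ1 : ℕ → FF) (k : ℕ) : Mmat κ1 k k = 1 := by
  rw [Mmat, Mcol]
  by_cases hk : k % 2 = 0
  · rw [if_pos hk, Finsupp.add_apply, Finsupp.single_apply, if_pos rfl,
      Finsupp.single_apply, if_neg (by omega)]
    omega
  · rw [if_neg hk, Finsupp.add_apply, Finsupp.single_apply, if_pos rfl,
      Finsupp.mapDomain_notin_range]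
    · omega
    · rintro ⟨s, hs⟩
      unfold dbl at hs
      omega

lemma single_nonneg' (a k : ℕ) : 0 ≤ Finsupp.single a (1:ℤ) k := by
  rw [Finsupp.single_apply]; split_ifs <;> omega

lemma N_pos_of (κ0 κ1 : ℕ → FF) (k l : ℕ) (h : 1 ≤ Rcol κ0 κ1 l k) :
    1 ≤ Nmat κ0 κ1 k l := by
  rw [Nmat, Ncol, Finsupp.add_apply]
  have := single_nonneg' l k
  omega

lemma M_supp (κ0 κ1 : ℕ → FF) (k l : ℕ) (h : Nmat κ0 κ1 k l = 0) : Mmat κ1 k l = 0 := by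
  by_contra hM
  apply absurd h
  rw [Mmat, Mcol] at hM
  have hNpos : 1 ≤ Nmat κ0 κ1 k l → Nmat κ0 κ1 k l ≠ 0 := by omega
  by_cases hl : l % 2 = 0
  · obtain ⟨t, rfl⟩ : ∃ t, l = 2*t := ⟨l/2, by omega⟩
    rw [if_pos hl, Finsupp.add_apply, Finsupp.single_apply, Finsupp.single_apply] at hM
    have hk : k = 2*t ∨ k = 2*t+1 := by
      by_contra hcon
      push_neg at hcon
      rw [if_neg (by omega), if_neg (by omega)] at hM
      exact hM (by ring)
    apply hNpos
    apply N_pos_of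
    rw [Rcol, if_pos hl, show 2*t/2 = t by omega]
    rcases hk with rfl | rfl
    · rw [Cp_self]
    · rw [Cp_self']
  · obtain ⟨t, rfl⟩ : ∃ t, l = 2*t+1 := ⟨l/2, by omega⟩
    rw [if_neg hl, Finsupp.add_apply, show (2*t+1)/2 = t by omega] at hM
    by_cases hkl : k = 2*t+1
    · subst hkl
      have := N_diag κ0 κ1 (2*t+1)
      omega
    · rw [Finsupp.single_apply, if_neg (by omega)] at hM
      have hmap : Finsupp.mapDomain dbl (κ1 t) k ≠ 0 := by omega
      have hks : ∃ s, k = 2*s := by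
        by_contra hcon
        push_neg at hcon
        apply hmap
        apply Finsupp.mapDomain_notin_range
        rintro ⟨s, hs⟩
        exact hcon s (by unfold dbl at hs; omega)
      obtain ⟨s, rfl⟩ := hks
      have hκs : κ1 t s ≠ 0 := by
        have : Finsupp.mapDomain dbl (κ1 t) (dbl s) = κ1 t s :=
          Finsupp.mapDomain_apply dbl_inj _ s
        rw [show (2*s : ℕ) = dbl s from rfl, this] at hmap
        exact hmap
      apply hNpos
      apply N_pos_of
      rw [Rcol, if_neg hl, show (2*t+1)/2 = t by omega, Rodd,
        Finsupp.add_apply, Finsupp.add_apply]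
      have hsp := spread_nonneg (κ0 t) (2*s)
      by_cases hst : s = t
      · subst hst
        rw [Cp_self]
        have := sum_addF_apply_nonneg κ1 s (2*s)
        omega
      · have hmem : s ∈ addF κ1 t := addF_suppκ κ1 t s hκs hst
        have hone : (1:ℤ) ≤ (∑ s' ∈ addF κ1 t, Cp s') (2*s) := by
          rw [Finsupp.finset_sum_apply]
          calc (1:ℤ) = Cp s (2*s) := (Cp_self s).symm
            _ ≤ ∑ s' ∈ addF κ1 t, Cp s' (2*s) :=
              Finset.single_le_sum (fun s' _ => Cp_nonneg s' (2*s)) hmem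
        have := Cp_nonneg t (2*s)
        omega

/-! ### connectivity -/

def Reach (N : ℕ → ℕ → ℤ) (k l : ℕ) : Prop :=
  ∃ c : ℕ, ∃ ks ls : ℕ → ℕ,
    (∀ i ≤ c, 1 ≤ N (ks i) (ls i)) ∧ ks 0 = k ∧
    (∀ i < c, ls i = ks (i + 1)) ∧ ls c = l

lemma reach_edge {N : ℕ → ℕ → ℤ} {k l : ℕ} (h : 1 ≤ N k l) : Reach N k l :=
  ⟨0, fun _ => k, fun _ => l, fun _ _ => h, rfl, fun i hi => absurd hi (by omega), rfl⟩

lemma reach_trans {N : ℕ → ℕ → ℤ} {a b c' : ℕ}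
    (h1 : Reach N a b) (h2 : Reach N b c') : Reach N a c' := by
  obtain ⟨c1, ks1, ls1, he1, hk1, hl1, hend1⟩ := h1
  obtain ⟨c2, ks2, ls2, he2, hk2, hl2, hend2⟩ := h2
  refine ⟨c1 + 1 + c2,
    (fun i => if i ≤ c1 then ks1 i else ks2 (i - (c1+1))),
    (fun i => if i ≤ c1 then ls1 i else ls2 (i - (c1+1))), ?_, ?_, ?_, ?_⟩
  · intro i hi
    dsimp only
    by_cases h : i ≤ c1
    · rw [if_pos h, if_pos h]; exact he1 i h
    · rw [if_neg h, if_neg h]; exact he2 _ (by omega)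
  · dsimp only
    rw [if_pos (Nat.zero_le c1)]; exact hk1
  · intro i hi
    dsimp only
    by_cases h : i ≤ c1
    · by_cases h' : i = c1
      · rw [h']
        rw [if_pos le_rfl, if_neg (by omega), hend1,
          show c1 + 1 - (c1+1) = 0 by omega, hk2]
      · rw [if_pos h, if_pos (by omega)]
        exact hl1 i (by omega)
    · rw [if_neg h, if_neg (by omega),
        show i + 1 - (c1+1) = (i - (c1+1)) + 1 by omega]
      exact hl2 _ (by omega)
  · dsimp only
    rw [if_neg (by omega), show c1 + 1 + c2 - (c1+1) = c2 by omega]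
    exact hend2

lemma edgeE1 (κ0 κ1 : ℕ → FF) (t : ℕ) : 1 ≤ Nmat κ0 κ1 (2*t+1) (2*t) := by
  apply N_pos_of
  rw [Rcol, if_pos (by omega), show 2*t/2 = t by omega, Cp_self']

lemma edgeE2 (κ0 κ1 : ℕ → FF) (t : ℕ) : 1 ≤ Nmat κ0 κ1 (2*t) (2*t+1) := by
  apply N_pos_of
  rw [Rcol, if_neg (by omega), show (2*t+1)/2 = t by omega, Rodd,
    Finsupp.add_apply, Finsupp.add_apply, Cp_self]
  have := spread_nonneg (κ0 t) (2*t)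
  have := sum_addF_apply_nonneg κ1 t (2*t)
  omega

lemma edgeE3 (κ0 κ1 : ℕ → FF) (t : ℕ) : 1 ≤ Nmat κ0 κ1 (2*(t+1)+1) (2*t+1) := by
  apply N_pos_of
  rw [Rcol, if_neg (by omega), show (2*t+1)/2 = t by omega, Rodd,
    Finsupp.add_apply, Finsupp.add_apply]
  have hone : (1:ℤ) ≤ (∑ s' ∈ addF κ1 t, Cp s') (2*(t+1)+1) := by
    rw [Finsupp.finset_sum_apply]
    calc (1:ℤ) = Cp (t+1) (2*(t+1)+1) := (Cp_self' (t+1)).symm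
      _ ≤ ∑ s' ∈ addF κ1 t, Cp s' (2*(t+1)+1) :=
        Finset.single_le_sum (fun s' _ => Cp_nonneg s' _) (addF_succ κ1 t)
  have := spread_nonneg (κ0 t) (2*(t+1)+1)
  have := Cp_nonneg t (2*(t+1)+1)
  omega

lemma edgeE4 (κ0 κ1 : ℕ → FF) (t : ℕ) : 1 ≤ Nmat κ0 κ1 (2*t+1) (2*(t+1)+1) := by
  apply N_pos_of
  rw [Rcol, if_neg (by omega), show (2*(t+1)+1)/2 = t+1 by omega, Rodd,
    Finsupp.add_apply, Finsupp.add_apply]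
  have hone : (1:ℤ) ≤ (∑ s' ∈ addF κ1 (t+1), Cp s') (2*t+1) := by
    rw [Finsupp.finset_sum_apply]
    calc (1:ℤ) = Cp t (2*t+1) := (Cp_self' t).symm
      _ ≤ ∑ s' ∈ addF κ1 (t+1), Cp s' (2*t+1) :=
        Finset.single_le_sum (fun s' _ => Cp_nonneg s' _) (addF_pred κ1 t)
  have := spread_nonneg (κ0 (t+1)) (2*t+1)
  have := Cp_nonneg (t+1) (2*t+1)
  omega

lemma reach_odd_up (κ0 κ1 : ℕ → FF) : ∀ n t, Reach (Nmat κ0 κ1) (2*(t+n)+1) (2*t+1) := by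
  intro n
  induction n with
  | zero =>
    intro t
    show Reach (Nmat κ0 κ1) (2*t+1) (2*t+1)
    exact reach_edge (by have := N_diag κ0 κ1 (2*t+1); omega)
  | succ n ih =>
    intro t
    have h1 : Reach (Nmat κ0 κ1) (2*(t+n+1)+1) (2*(t+n)+1) := reach_edge (edgeE3 κ0 κ1 (t+n))
    have := reach_trans h1 (ih t)
    rw [show t + (n+1) = t + n + 1 by omega]
    exact this

lemma reach_odd_down (κ0 κ1 : ℕ → FF) : ∀ n t, Reach (Nmat κ0 κ1) (2*t+1) (2*(t+n)+1) := by
  intro n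
  induction n with
  | zero =>
    intro t
    show Reach (Nmat κ0 κ1) (2*t+1) (2*t+1)
    exact reach_edge (by have := N_diag κ0 κ1 (2*t+1); omega)
  | succ n ih =>
    intro t
    have h1 : Reach (Nmat κ0 κ1) (2*(t+n)+1) (2*(t+n+1)+1) := reach_edge (edgeE4 κ0 κ1 (t+n))
    have := reach_trans (ih t) h1
    rw [show t + (n+1) = t + n + 1 by omega]
    exact this

lemma reach_odd (κ0 κ1 : ℕ → FF) (a b : ℕ) : Reach (Nmat κ0 κ1) (2*a+1) (2*b+1) := by
  rcases le_total a b with h | h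
  · have := reach_odd_down κ0 κ1 (b - a) a
    rw [show a + (b - a) = b by omega] at this
    exact this
  · have := reach_odd_up κ0 κ1 (a - b) b
    rw [show b + (a - b) = a by omega] at this
    exact this

lemma reach_all (κ0 κ1 : ℕ → FF) (k l : ℕ) : Reach (Nmat κ0 κ1) k l := by
  have hk : Reach (Nmat κ0 κ1) k (2*(k/2)+1) := by
    by_cases hke : k % 2 = 0
    · obtain ⟨t, rfl⟩ : ∃ t, k = 2*t := ⟨k/2, by omega⟩
      rw [show 2*t/2 = t by omega]
      exact reach_edge (edgeE2 κ0 κ1 t)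
    · obtain ⟨t, rfl⟩ : ∃ t, k = 2*t+1 := ⟨k/2, by omega⟩
      rw [show (2*t+1)/2 = t by omega]
      exact reach_edge (by have := N_diag κ0 κ1 (2*t+1); omega)
  have hl : Reach (Nmat κ0 κ1) (2*(l/2)+1) l := by
    by_cases hle : l % 2 = 0
    · obtain ⟨t, rfl⟩ : ∃ t, l = 2*t := ⟨l/2, by omega⟩
      rw [show 2*t/2 = t by omega]
      exact reach_edge (edgeE1 κ0 κ1 t)
    · obtain ⟨t, rfl⟩ : ∃ t, l = 2*t+1 := ⟨l/2, by omega⟩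
      rw [show (2*t+1)/2 = t by omega]
      exact reach_edge (by have := N_diag κ0 κ1 (2*t+1); omega)
  exact reach_trans (reach_trans hk (reach_odd κ0 κ1 (k/2) (l/2))) hl

end Stmt11Aux

/-- For any countable abelian groups `G₀, G₁` there are column-finite matrices
`N ∈ M_∞(ℕ)` and `M ∈ M_∞(ℤ)` such that (i) `N_{kl} = 0 → M_{kl} = 0`;
(ii) `N_{kk} ≥ 2` and `M_{kk} = 1`; (iii) the graph with an edge from `l` to `k`
whenever `N_{kl} ≥ 1` is strongly connected; (iv) `I − N` and `I − M` are injective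
on `ℤ^(∞)` with `coker(I−N) ≅ G₀` and `coker(I−M) ≅ G₁`. -/
theorem stmt11 (G₀ G₁ : Type) [AddCommGroup G₀] [AddCommGroup G₁]
    [Countable G₀] [Countable G₁] :
    ∃ N M : ℕ → ℕ → ℤ, ColFin N ∧ ColFin M ∧
      (∀ k l, 0 ≤ N k l) ∧
      (∀ k l, N k l = 0 → M k l = 0) ∧
      (∀ k, 2 ≤ N k k) ∧ (∀ k, M k k = 1) ∧
      (∀ k l : ℕ, ∃ c : ℕ, ∃ ks ls : ℕ → ℕ,
        (∀ i ≤ c, 1 ≤ N (ks i) (ls i)) ∧ ks 0 = k ∧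
        (∀ i < c, ls i = ks (i + 1)) ∧ ls c = l) ∧
      Function.Injective (matHom fun k l => idMat ℕ k l - N k l) ∧
      Function.Injective (matHom fun k l => idMat ℕ k l - M k l) ∧
      Nonempty (((ℕ →₀ ℤ) ⧸
        LinearMap.range (matHom fun k l => idMat ℕ k l - N k l)) ≃+ G₀) ∧
      Nonempty (((ℕ →₀ ℤ) ⧸
        LinearMap.range (matHom fun k l => idMat ℕ k l - M k l)) ≃+ G₁) := by
  classical
  obtain ⟨lab0, κ0, hsurj0, hind0, hspan0⟩ := Stmt11Aux.core G₀
  obtain ⟨lab1, κ1, hsurj1, hind1, hspan1⟩ := Stmt11Aux.core G₁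
  refine ⟨Stmt11Aux.Nmat κ0 κ1, Stmt11Aux.Mmat κ1,
    ?_, ?_, ?_, ?_, ?_, ?_, ?_, ?_, ?_, ?_, ?_⟩
  · exact Stmt11Aux.colFin_of_finsupp _ (Stmt11Aux.Ncol κ0 κ1) (fun k l => rfl)
  · exact Stmt11Aux.colFin_of_finsupp _ (Stmt11Aux.Mcol κ1) (fun k l => rfl)
  · exact Stmt11Aux.N_nonneg κ0 κ1
  · exact Stmt11Aux.M_supp κ0 κ1
  · exact Stmt11Aux.N_diag κ0 κ1
  · exact Stmt11Aux.M_diag κ1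
  · exact fun k l => Stmt11Aux.reach_all κ0 κ1 k l
  · exact Stmt11Aux.N_inj κ0 κ1 hind0
  · exact Stmt11Aux.M_inj κ1 hind1
  · have h := Stmt11Aux.N_range_eq lab0 κ0 κ1 hspan0
    have hsurj : Function.Surjective
        ⇑((Finsupp.linearCombination ℤ lab0).comp Stmt11Aux.qmap) := by
      rw [LinearMap.coe_comp]
      exact hsurj0.comp Stmt11Aux.qmap_surjective
    exact ⟨((Submodule.quotEquivOfEq _ _ h).trans
      (LinearMap.quotKerEquivOfSurjective _ hsurj)).toAddEquiv⟩
  · have h := Stmt11Aux.M_range_eq lab1 κ1 hspan1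
    have hsurj : Function.Surjective
        ⇑((Finsupp.linearCombination ℤ lab1).comp Stmt11Aux.emap) := by
      rw [LinearMap.coe_comp]
      exact hsurj1.comp Stmt11Aux.emap_surjective
    exact ⟨((Submodule.quotEquivOfEq _ _ h).trans
      (LinearMap.quotKerEquivOfSurjective _ hsurj)).toAddEquiv⟩
end

section
/- Let G₀ and G₁ be finitely generated abelian groups such that rank(G₁) ≤ rank(G₀), and let l₀ = rank(G₀) − rank(G₁). Then there exist L ∈ ℤ₊, a matrix T ∈ M_{L,L−l₀}(ℕ) with nonnegative integer entries, and a matrix S ∈ M_L(ℕ) with nonnegative integer entries such that G₀ ≅ coker T ⊕ ker S and G₁ ≅ ker T ⊕ coker S, where T and S are viewed as group homomorphisms ℤ^{L−l₀} → ℤ^L and ℤ^L → ℤ^L respectively. -/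
open Matrix DirectSum

section Helpers

def myPiCongrLeft' {ι ι' : Type*} (F : ι → Type*) [∀ i, AddZeroClass (F i)] (e : ι ≃ ι') :
    (∀ i, F i) ≃+ ∀ i', F (e.symm i') where
  toEquiv := Equiv.piCongrLeft' F e
  map_add' _ _ := rfl

def myPiCongrLeft {ι ι' : Type*} (F : ι' → Type*) [∀ i, AddZeroClass (F i)] (e : ι ≃ ι') :
    (∀ i, F (e i)) ≃+ ∀ i, F i :=
  (myPiCongrLeft' F e.symm).symm

def mySumPi {ι ι' : Type*} (F : ι ⊕ ι' → Type*) [∀ i, AddZeroClass (F i)] :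
    (∀ i, F i) ≃+ (∀ i, F (Sum.inl i)) × (∀ i, F (Sum.inr i)) where
  toEquiv := Equiv.sumPiEquivProdPi F
  map_add' _ _ := rfl

def myFinSplit (m n : ℕ) (F : Fin (m + n) → Type*) [∀ i, AddZeroClass (F i)] :
    (∀ i, F i) ≃+ (∀ i : Fin m, F (Fin.castAdd n i)) × (∀ i : Fin n, F (Fin.natAdd m i)) :=
  ((myPiCongrLeft F finSumFinEquiv).symm.trans
    (mySumPi (fun s => F (finSumFinEquiv s))))

def myProdSubsingleton (M N : Type*) [AddZeroClass M] [AddZeroClass N] [Subsingleton N] :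
    (M × N) ≃+ M where
  toFun := Prod.fst
  invFun m := (m, 0)
  left_inv p := by ext; rfl; exact Subsingleton.elim _ _
  right_inv m := rfl
  map_add' _ _ := rfl

def myArrowCongr {α β M : Type*} [AddZeroClass M] (e : α ≃ β) : (α → M) ≃+ (β → M) where
  toEquiv := Equiv.arrowCongr e (Equiv.refl M)
  map_add' _ _ := rfl

end Helpers

section Dmat

def dmat (L c : ℕ) (v : Fin c → ℤ) : Matrix (Fin L) (Fin c) ℤ :=
  Matrix.of fun i j => if (i : ℕ) = (j : ℕ) then v j else 0

lemma dmat_mulVecLin {L c : ℕ} (v : Fin c → ℤ) (x : Fin c → ℤ) (i : Fin L) :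
    (dmat L c v).mulVecLin x i = if h : (i : ℕ) < c then v ⟨i, h⟩ * x ⟨i, h⟩ else 0 := by
  rw [Matrix.mulVecLin_apply]
  simp only [Matrix.mulVec, dotProduct, dmat, Matrix.of_apply, ite_mul, zero_mul]
  by_cases h : (i : ℕ) < c
  · rw [dif_pos h]
    rw [Finset.sum_eq_single (⟨(i : ℕ), h⟩ : Fin c)]
    · simp
    · intro j _ hj
      rw [if_neg]
      intro hij
      exact hj (by exact Fin.ext hij.symm)
    · simp
  · rw [dif_neg h]
    apply Finset.sum_eq_zero
    intro j _
    rw [if_neg]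
    intro hij
    exact h (hij ▸ j.isLt)

lemma range_dmat {L c : ℕ} (hcL : c ≤ L) (v : Fin c → ℤ) :
    LinearMap.range (dmat L c v).mulVecLin =
      Submodule.pi Set.univ
        (fun i : Fin L =>
          (Ideal.span {if h : (i : ℕ) < c then v ⟨i, h⟩ else 0} : Submodule ℤ ℤ)) := by
  ext y
  simp only [LinearMap.mem_range, Submodule.mem_pi, Set.mem_univ, forall_true_left]
  constructor
  · rintro ⟨x, rfl⟩ i
    rw [dmat_mulVecLin]
    by_cases h : (i : ℕ) < c
    · rw [dif_pos h, dif_pos h]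
      exact Ideal.mem_span_singleton'.mpr ⟨x ⟨i, h⟩, mul_comm _ _⟩
    · rw [dif_neg h, dif_neg h]
      exact Submodule.zero_mem _
  · intro hy
    choose a ha using fun i => Ideal.mem_span_singleton'.mp (hy i)
    refine ⟨fun j => a (Fin.castLE hcL j), ?_⟩
    funext i
    rw [dmat_mulVecLin]
    by_cases h : (i : ℕ) < c
    · rw [dif_pos h]
      have : (Fin.castLE hcL ⟨(i : ℕ), h⟩) = i := by ext; rfl
      rw [this, ← ha i, dif_pos h, mul_comm]
    · rw [dif_neg h]
      have := ha i
      rw [dif_neg h, mul_zero] at this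
      exact this

noncomputable def cokerEquiv {L c : ℕ} (hcL : c ≤ L) (v : Fin c → ℤ) :
    ((Fin L → ℤ) ⧸ LinearMap.range (dmat L c v).mulVecLin) ≃+
      ∀ i : Fin L, ZMod (if h : (i : ℕ) < c then v ⟨i, h⟩ else 0).natAbs :=
  (Submodule.quotEquivOfEq _ _ (range_dmat hcL v)).toAddEquiv.trans
    ((Submodule.quotientPi _).toAddEquiv.trans
      (AddEquiv.piCongrRight fun i => (Int.quotientSpanEquivZMod _).toAddEquiv))

noncomputable def kerEquiv {L c : ℕ} (hcL : c ≤ L) (v : Fin c → ℤ) :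
    (LinearMap.ker (dmat L c v).mulVecLin) ≃+ (∀ _j : {j : Fin c // v j = 0}, ℤ) := by
  let φ : (∀ _j : {j : Fin c // v j = 0}, ℤ) →ₗ[ℤ] (Fin c → ℤ) :=
    LinearMap.pi
      (fun j => if h : v j = 0 then LinearMap.proj (⟨j, h⟩ : {j : Fin c // v j = 0}) else 0)
  have hφ : ∀ x j, φ x j = if h : v j = 0 then x ⟨j, h⟩ else 0 := by
    intro x j
    simp only [φ, LinearMap.pi_apply]
    split <;> simp_all
  have hinj : Function.Injective φ := by
    intro x y hxy
    funext j
    simpa [hφ, j.2] using congrFun hxy j.1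
  have hrange : LinearMap.range φ = LinearMap.ker (dmat L c v).mulVecLin := by
    ext x
    constructor
    · rintro ⟨y, rfl⟩
      rw [LinearMap.mem_ker]
      funext i
      rw [dmat_mulVecLin]
      simp only [Pi.zero_apply]
      by_cases h : (i : ℕ) < c
      · rw [dif_pos h, hφ]
        by_cases hv : v ⟨(i : ℕ), h⟩ = 0
        · exact mul_eq_zero_of_left hv _
        · rw [dif_neg hv, mul_zero]
      · rw [dif_neg h]
    · intro hx
      rw [LinearMap.mem_ker] at hx
      have key : ∀ j : Fin c, v j * x j = 0 := by
        intro j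
        have := congrFun hx (Fin.castLE hcL j)
        rw [dmat_mulVecLin,
          dif_pos (show ((Fin.castLE hcL j : Fin L) : ℕ) < c from j.isLt)] at this
        have hj : (⟨((Fin.castLE hcL j : Fin L) : ℕ), j.isLt⟩ : Fin c) = j := by ext; rfl
        rwa [hj] at this
      refine ⟨fun j => x j.1, ?_⟩
      funext j
      rw [hφ]
      by_cases hv : v j = 0
      · rw [dif_pos hv]
      · rw [dif_neg hv]
        rcases mul_eq_zero.mp (key j) with h | h
        · exact absurd h hv
        · exact h.symm
  exact ((LinearEquiv.ofInjective φ hinj).trans (LinearEquiv.ofEq _ _ hrange)).symm.toAddEquiv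

end Dmat

section Rank

lemma my_finrank_eq (n k : ℕ) (d : Fin k → ℕ) (hd : ∀ i, 0 < d i) :
    Module.finrank ℤ ((Fin n → ℤ) × ∀ i : Fin k, ZMod (d i)) = n := by
  set M := (Fin n → ℤ) × ∀ i : Fin k, ZMod (d i)
  have : ∀ i, NeZero (d i) := fun i => ⟨(hd i).ne'⟩
  let f : M →ₗ[ℤ] (Fin n → ℤ) := LinearMap.fst ℤ _ _
  have hsurj : Function.Surjective f := fun y => ⟨(y, 0), rfl⟩
  have hker : LinearMap.ker f ≤ Submodule.torsion ℤ M := by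
    intro x hx
    rw [LinearMap.mem_ker] at hx
    set N : ℕ := ∏ i, d i
    have hN : (N : ℤ) ≠ 0 := by
      simp only [N, Nat.cast_prod]
      exact Finset.prod_ne_zero_iff.mpr fun i _ => Int.natCast_ne_zero.mpr (hd i).ne'
    refine ⟨⟨(N : ℤ), mem_nonZeroDivisors_of_ne_zero hN⟩, ?_⟩
    have h2 : ∀ i : Fin k, (N : ℤ) • x.2 i = 0 := by
      intro i
      have hdvd : d i ∣ N := Finset.dvd_prod_of_mem d (Finset.mem_univ i)
      have h0 : ((N : ℤ) : ZMod (d i)) = 0 := by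
        rw [Int.cast_natCast]
        exact (ZMod.natCast_eq_zero_iff N (d i)).mpr hdvd
      calc (N : ℤ) • x.2 i = ((N : ℤ) : ZMod (d i)) * x.2 i := zsmul_eq_mul _ _
        _ = 0 := by rw [h0, zero_mul]
    have hfst : x.1 = 0 := hx
    have : (N : ℤ) • x = 0 := by
      ext j
      · show (N : ℤ) • x.1 j = 0
        rw [hfst]; simp
      · exact h2 _
    exact this
  have h1 : Module.rank ℤ M = Module.rank ℤ (Fin n → ℤ) := by
    rw [← rank_quotient_eq_of_le_torsion hker]
    exact (f.quotKerEquivOfSurjective hsurj).rank_eq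
  rw [Module.finrank, h1, ← Module.finrank]
  simp

lemma my_classify (G : Type) [AddCommGroup G] [Module.Finite ℤ G] :
    ∃ (n k : ℕ) (d : Fin k → ℕ), (∀ i, 0 < d i) ∧
      Nonempty (G ≃+ (Fin n → ℤ) × ∀ i : Fin k, ZMod (d i)) := by
  have hFG : AddGroup.FG G := Module.Finite.iff_addGroup_fg.mp ‹_›
  obtain ⟨n, ι, fι, p, hp, e, ⟨f⟩⟩ := AddCommGroup.equiv_free_prod_directSum_zmod G
  let eι : Fin (Fintype.card ι) ≃ ι := (Fintype.equivFin ι).symm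
  refine ⟨n, Fintype.card ι, fun j => p (eι j) ^ e (eι j),
    fun j => pow_pos (hp (eι j)).pos _, ⟨?_⟩⟩
  exact f.trans
    ((AddEquiv.prodCongr Finsupp.addEquivFunOnFinite
        (DirectSum.linearEquivFunOnFintype ℤ ι (fun i => ZMod (p i ^ e i))).toAddEquiv).trans
      (AddEquiv.prodCongr (AddEquiv.refl _) (myPiCongrLeft _ eι).symm))

end Rank

section Blocks

def vblk (k a c : ℕ) (d : Fin k → ℕ) : Fin c → ℤ :=
  fun j => if h : (j : ℕ) < k then (d ⟨j, h⟩ : ℤ) else if (j : ℕ) < a then 1 else 0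

lemma vblk_nonneg (k a c : ℕ) (d : Fin k → ℕ) (j : Fin c) : 0 ≤ vblk k a c d j := by
  unfold vblk
  split_ifs <;> simp

lemma vblk_eq_zero_iff {k a c : ℕ} (d : Fin k → ℕ) (hd : ∀ i, 0 < d i) (hk : k ≤ a)
    (j : Fin c) : vblk k a c d j = 0 ↔ a ≤ (j : ℕ) := by
  unfold vblk
  split_ifs with h1 h2
  · constructor
    · intro h0
      exact absurd (Int.natCast_eq_zero.mp h0) (hd _).ne'
    · intro h0
      omega
  · constructor
    · intro h0
      exact absurd h0 one_ne_zero
    · intro h0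
      omega
  · constructor
    · intro _
      omega
    · intro _
      rfl

noncomputable def blockEquiv (x y z : ℕ) (m : Fin (x + y + z) → ℕ) (dd : Fin x → ℕ)
    (h1 : ∀ (i : Fin (x + y + z)) (h : (i : ℕ) < x), m i = dd ⟨(i : ℕ), h⟩)
    (h2 : ∀ i : Fin (x + y + z), x ≤ (i : ℕ) → (i : ℕ) < x + y → m i = 1)
    (h3 : ∀ i : Fin (x + y + z), x + y ≤ (i : ℕ) → m i = 0) :
    (∀ i, ZMod (m i)) ≃+ (Fin z → ℤ) × ∀ i : Fin x, ZMod (dd i) := by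
  refine (myFinSplit (x + y) z (fun i => ZMod (m i))).trans ?_
  refine AddEquiv.trans ?_ (AddEquiv.prodComm)
  refine AddEquiv.prodCongr ?_ ?_
  · refine (myFinSplit x y (fun i => ZMod (m (Fin.castAdd z i)))).trans ?_
    have : Subsingleton (∀ i : Fin y, ZMod (m (Fin.castAdd z (Fin.natAdd x i)))) := by
      refine @Pi.instSubsingleton _ _ ?_
      intro i
      have hm : m (Fin.castAdd z (Fin.natAdd x i)) = 1 := by
        refine h2 _ (by simp) ?_
        have : ((Fin.castAdd z (Fin.natAdd x i) : Fin (x + y + z)) : ℕ) = x + (i : ℕ) := rfl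
        omega
      rw [hm]
      infer_instance
    refine (myProdSubsingleton _ _).trans ?_
    refine AddEquiv.piCongrRight fun i => ?_
    have hm : m (Fin.castAdd z (Fin.castAdd y i)) = dd i := by
      have h := h1 (Fin.castAdd z (Fin.castAdd y i)) (by simp)
      rwa [show (⟨((Fin.castAdd z (Fin.castAdd y i) : Fin (x + y + z)) : ℕ), by simp⟩ : Fin x) = i
        from Fin.ext rfl] at h
    exact (ZMod.ringEquivCongr hm).toAddEquiv
  · refine AddEquiv.piCongrRight fun i => ?_
    have hm : m (Fin.natAdd (x + y) i) = 0 := h3 _ (by simp)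
    exact (ZMod.ringEquivCongr hm).toAddEquiv.trans (AddEquiv.refl ℤ)

end Blocks

lemma main_aux (n₀ k₀ n₁ k₁ : ℕ) (d₀ : Fin k₀ → ℕ) (d₁ : Fin k₁ → ℕ)
    (hd₀ : ∀ i, 0 < d₀ i) (hd₁ : ∀ i, 0 < d₁ i) (hn : n₁ ≤ n₀) :
    ∃ T : Matrix (Fin (k₀ + (k₁ + 1) + n₀)) (Fin (k₀ + (k₁ + 1) + n₁)) ℤ,
      ∃ S : Matrix (Fin (k₀ + (k₁ + 1) + n₀)) (Fin (k₀ + (k₁ + 1) + n₀)) ℤ,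
        (∀ i j, 0 ≤ T i j) ∧ (∀ i j, 0 ≤ S i j) ∧
        Nonempty ((((Fin (k₀ + (k₁ + 1) + n₀) → ℤ) ⧸ LinearMap.range T.mulVecLin) ×
            LinearMap.ker S.mulVecLin) ≃+ ((Fin n₀ → ℤ) × ∀ i : Fin k₀, ZMod (d₀ i))) ∧
        Nonempty ((LinearMap.ker T.mulVecLin ×
            ((Fin (k₀ + (k₁ + 1) + n₀) → ℤ) ⧸ LinearMap.range S.mulVecLin)) ≃+
          ((Fin n₁ → ℤ) × ∀ i : Fin k₁, ZMod (d₁ i))) := by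
  have hcL : k₀ + (k₁ + 1) + n₁ ≤ k₀ + (k₁ + 1) + n₀ := by omega
  set L := k₀ + (k₁ + 1) + n₀ with hLdef
  set c := k₀ + (k₁ + 1) + n₁ with hcdef
  set vT : Fin c → ℤ := vblk k₀ (k₀ + (k₁ + 1)) c d₀ with hvT
  set vS : Fin L → ℤ := vblk k₁ L L d₁ with hvS
  refine ⟨dmat L c vT, dmat L L vS, ?_, ?_, ⟨?_⟩, ⟨?_⟩⟩
  · intro i j
    show (0 : ℤ) ≤ if (i : ℕ) = (j : ℕ) then vT j else 0
    split_ifs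
    · exact vblk_nonneg _ _ _ _ _
    · exact le_refl 0
  · intro i j
    show (0 : ℤ) ≤ if (i : ℕ) = (j : ℕ) then vS j else 0
    split_ifs
    · exact vblk_nonneg _ _ _ _ _
    · exact le_refl 0
  · -- coker T × ker S ≃+ ℤ^n₀ × Π ZMod d₀
    have hSker : IsEmpty {j : Fin L // vS j = 0} := by
      refine ⟨fun j => ?_⟩
      have := (vblk_eq_zero_iff d₁ hd₁ (by omega) j.1).mp j.2
      have := j.1.isLt
      omega
    have : Subsingleton (LinearMap.ker (dmat L L vS).mulVecLin) :=
      (kerEquiv (le_refl L) vS).toEquiv.subsingleton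
    refine (myProdSubsingleton _ _).trans ?_
    refine (cokerEquiv hcL vT).trans ?_
    refine blockEquiv k₀ (k₁ + 1) n₀ _ d₀ ?_ ?_ ?_
    · intro i h
      have hc : (i : ℕ) < c := by omega
      rw [dif_pos hc]
      show (vblk k₀ (k₀ + (k₁ + 1)) c d₀ ⟨(i : ℕ), hc⟩).natAbs = d₀ ⟨(i : ℕ), h⟩
      unfold vblk
      split_ifs with h'
      · simp
      · exact absurd h h'
    · intro i hx hxy
      have hc : (i : ℕ) < c := by omega
      rw [dif_pos hc]
      show (vblk k₀ (k₀ + (k₁ + 1)) c d₀ ⟨(i : ℕ), hc⟩).natAbs = 1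
      have hval : ((⟨(i : ℕ), hc⟩ : Fin c) : ℕ) = (i : ℕ) := rfl
      unfold vblk
      split_ifs with h'
      · exact absurd h' (by omega)
      · rfl
    · intro i h
      by_cases hc : (i : ℕ) < c
      · rw [dif_pos hc]
        show (vblk k₀ (k₀ + (k₁ + 1)) c d₀ ⟨(i : ℕ), hc⟩).natAbs = 0
        have hval : ((⟨(i : ℕ), hc⟩ : Fin c) : ℕ) = (i : ℕ) := rfl
        unfold vblk
        split_ifs with h' h''
        · exact absurd h' (by omega)
        · exact absurd h'' (by omega)
        · rfl
      · rw [dif_neg hc]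
        rfl
  · -- ker T × coker S ≃+ ℤ^n₁ × Π ZMod d₁
    have eSub : {j : Fin c // vT j = 0} ≃ Fin n₁ :=
      { toFun := fun j => ⟨(j.1 : ℕ) - (k₀ + (k₁ + 1)), by
          have := (vblk_eq_zero_iff d₀ hd₀ (by omega) j.1).mp j.2
          have := j.1.isLt
          omega⟩
        invFun := fun i => ⟨⟨k₀ + (k₁ + 1) + (i : ℕ), by have := i.isLt; omega⟩,
          (vblk_eq_zero_iff d₀ hd₀ (by omega) _).mpr (by simp)⟩
        left_inv := fun j => by
          have h0 := (vblk_eq_zero_iff d₀ hd₀ (by omega) j.1).mp j.2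
          apply Subtype.ext
          apply Fin.ext
          show k₀ + (k₁ + 1) + ((j.1 : ℕ) - (k₀ + (k₁ + 1))) = (j.1 : ℕ)
          omega
        right_inv := fun i => by
          apply Fin.ext
          show k₀ + (k₁ + 1) + (i : ℕ) - (k₀ + (k₁ + 1)) = (i : ℕ)
          omega }
    have eKT : (LinearMap.ker (dmat L c vT).mulVecLin) ≃+ (Fin n₁ → ℤ) :=
      (kerEquiv hcL vT).trans (myArrowCongr eSub)
    have hL' : k₁ + (k₀ + 1 + n₀) + 0 = L := by omega
    have eCS : ((Fin L → ℤ) ⧸ LinearMap.range (dmat L L vS).mulVecLin) ≃+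
        (∀ i : Fin k₁, ZMod (d₁ i)) := by
      refine (cokerEquiv (le_refl L) vS).trans ?_
      refine AddEquiv.trans
        ((myPiCongrLeft
          (fun i : Fin L => ZMod (if h : (i : ℕ) < L then vS ⟨(i : ℕ), h⟩ else 0).natAbs)
          (finCongr hL')).symm) ?_
      refine AddEquiv.trans
        (blockEquiv k₁ (k₀ + 1 + n₀) 0 _ d₁ ?_ ?_ ?_) ?_
      · intro i h
        have hc : ((finCongr hL' i : Fin L) : ℕ) < L := (finCongr hL' i).isLt
        show (if h' : ((finCongr hL' i : Fin L) : ℕ) < L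
            then vS ⟨((finCongr hL' i : Fin L) : ℕ), h'⟩ else 0).natAbs = d₁ ⟨(i : ℕ), h⟩
        rw [dif_pos hc]
        show (vblk k₁ L L d₁ ⟨_, hc⟩).natAbs = d₁ ⟨(i : ℕ), h⟩
        unfold vblk
        split_ifs with h'
        · simp
        · exact absurd h h'
      · intro i hx hxy
        have hc : ((finCongr hL' i : Fin L) : ℕ) < L := (finCongr hL' i).isLt
        show (if h' : ((finCongr hL' i : Fin L) : ℕ) < L
            then vS ⟨((finCongr hL' i : Fin L) : ℕ), h'⟩ else 0).natAbs = 1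
        rw [dif_pos hc]
        show (vblk k₁ L L d₁ ⟨((finCongr hL' i : Fin L) : ℕ), hc⟩).natAbs = 1
        have hval : ((⟨((finCongr hL' i : Fin L) : ℕ), hc⟩ : Fin L) : ℕ) = (i : ℕ) := rfl
        unfold vblk
        split_ifs with h'
        · exact absurd h' (by omega)
        · rfl
      · intro i h
        have := i.isLt
        exact absurd h (by omega)
      · exact (AddEquiv.prodComm).trans (myProdSubsingleton _ _)
    exact AddEquiv.prodCongr eKT eCS

/-- If `G₀, G₁` are finitely generated abelian groups with `rank(G₁) ≤ rank(G₀)` and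
`l₀ = rank(G₀) − rank(G₁)`, then there are `L ∈ ℤ₊` and nonnegative integer matrices
`T ∈ M_{L, L−l₀}(ℕ)`, `S ∈ M_L(ℕ)` with `G₀ ≅ coker T ⊕ ker S` and
`G₁ ≅ ker T ⊕ coker S` (viewing `T : ℤ^{L−l₀} → ℤ^L` and `S : ℤ^L → ℤ^L`). -/
theorem stmt15 (G₀ G₁ : Type) [AddCommGroup G₀] [AddCommGroup G₁]
    [Module.Finite ℤ G₀] [Module.Finite ℤ G₁]
    (hrank : Module.finrank ℤ G₁ ≤ Module.finrank ℤ G₀) :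
    ∃ L : ℕ, 0 < L ∧
      ∃ T : Matrix (Fin L) (Fin (L - (Module.finrank ℤ G₀ - Module.finrank ℤ G₁))) ℤ,
        ∃ S : Matrix (Fin L) (Fin L) ℤ,
          (∀ i j, 0 ≤ T i j) ∧ (∀ i j, 0 ≤ S i j) ∧
          Nonempty (G₀ ≃+
            (((Fin L → ℤ) ⧸ LinearMap.range T.mulVecLin) ×
              LinearMap.ker S.mulVecLin)) ∧
          Nonempty (G₁ ≃+
            ((LinearMap.ker T.mulVecLin) ×
              ((Fin L → ℤ) ⧸ LinearMap.range S.mulVecLin))) := by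
  obtain ⟨n₀, k₀, d₀, hd₀, ⟨e₀⟩⟩ := my_classify G₀
  obtain ⟨n₁, k₁, d₁, hd₁, ⟨e₁⟩⟩ := my_classify G₁
  have hr₀ : Module.finrank ℤ G₀ = n₀ := by
    rw [e₀.toIntLinearEquiv.finrank_eq]
    exact my_finrank_eq n₀ k₀ d₀ hd₀
  have hr₁ : Module.finrank ℤ G₁ = n₁ := by
    rw [e₁.toIntLinearEquiv.finrank_eq]
    exact my_finrank_eq n₁ k₁ d₁ hd₁
  rw [hr₀, hr₁] at hrank ⊢
  refine ⟨k₀ + (k₁ + 1) + n₀, by omega, ?_⟩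
  rw [show k₀ + (k₁ + 1) + n₀ - (n₀ - n₁) = k₀ + (k₁ + 1) + n₁ from by omega]
  obtain ⟨T, S, hT, hS, ⟨eA⟩, ⟨eB⟩⟩ := main_aux n₀ k₀ n₁ k₁ d₀ d₁ hd₀ hd₁ hrank
  exact ⟨T, S, hT, hS, ⟨e₀.trans eA.symm⟩, ⟨e₁.trans eB.symm⟩⟩
end

section
/- Let L ≥ 1, l₀ ≥ 0, let T̃ ∈ M_L(ℕ) and S ∈ M_L(ℕ), let X ∈ M_L(ℕ) be the tridiagonal 0–1 matrix (X_{kl} = 1 iff |k−l| ≤ 1), and set Ñ = [[2I, T̃+S+X],[I, I+S+X]] ∈ M_{2L}(ℕ) and M = [[I, S],[I, I]] ∈ M_{2L}(ℕ). Let T ∈ M_{L,L−l₀}(ℕ) be the restriction of T̃ to its first L−l₀ columns, N the corresponding restriction of Ñ (a 2L × (2L−l₀) matrix), I₁ the 2L × 2L identity, and I₀ its restriction to the first 2L−l₀ columns. Then coker(I₀ − N) ≅ coker T, ker(I₀ − N) ≅ ker T, coker(I₁ − M) ≅ coker S, and ker(I₁ − M) ≅ ker S. -/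
/-!
Cokernel and kernel of a matrix do not change when it is multiplied by invertible matrices on
either side. Writing `A`, `B` for the column restrictions of `T̃ + S + X` and `S + X`, one has
`I₀ − N = [[-1, -A], [-1, -B]]`; the LDU decomposition around the invertible corner `-1` leaves
the block diagonal matrix `[[-1, 0], [0, A - B]]`, and the Schur complement `A - B` is `T`.
Similarly `I₁ − M = [[0, -S], [-1, 0]] = [[0, -1], [1, 0]] · [[-1, 0], [0, S]]`. Finally a block
diagonal matrix with one invertible block has the cokernel and kernel of the other block.
-/

namespace LinearMap

variable {R M N M' N' : Type*} [Ring R] [AddCommGroup M] [AddCommGroup N] [AddCommGroup M']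
  [AddCommGroup N'] [Module R M] [Module R N] [Module R M'] [Module R N']
  {f : M →ₗ[R] N} {g : M' →ₗ[R] N'} {e₁ : M ≃ₗ[R] M'} {e₂ : N ≃ₗ[R] N'}

theorem map_range_eq_range_of_comm (h : g ∘ₗ e₁ = e₂ ∘ₗ f) :
    (range f).map (e₂ : N →ₗ[R] N') = range g := by
  rw [← range_comp, ← h, LinearEquiv.range_comp]

theorem map_ker_eq_ker_of_comm (h : g ∘ₗ e₁ = e₂ ∘ₗ f) :
    (ker f).map (e₁ : M →ₗ[R] M') = ker g := by
  rw [← LinearEquiv.ker_comp e₂ f, ← h, ker_comp,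
    Submodule.map_comap_eq_of_surjective e₁.surjective]

noncomputable def rangeQuotEquivOfComm (h : g ∘ₗ e₁ = e₂ ∘ₗ f) :
    (N ⧸ range f) ≃ₗ[R] N' ⧸ range g :=
  Submodule.Quotient.equiv _ _ e₂ (map_range_eq_range_of_comm h)

noncomputable def kerEquivOfComm (h : g ∘ₗ e₁ = e₂ ∘ₗ f) : ker f ≃ₗ[R] ker g :=
  e₁.submoduleMap (ker f) ≪≫ₗ LinearEquiv.ofEq _ _ (map_ker_eq_ker_of_comm h)

end LinearMap

noncomputable def Submodule.comapQuotEquivOfSurjective {R N N' : Type*} [Ring R]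
    [AddCommGroup N] [AddCommGroup N'] [Module R N] [Module R N'] {π : N →ₗ[R] N'}
    (hπ : Function.Surjective π) (q : Submodule R N') : (N ⧸ q.comap π) ≃ₗ[R] N' ⧸ q :=
  Submodule.quotEquivOfEq _ _ (by rw [LinearMap.ker_comp, Submodule.ker_mkQ]) ≪≫ₗ
    (q.mkQ ∘ₗ π).quotKerEquivOfSurjective (q.mkQ_surjective.comp hπ)

attribute [local instance] invertibleOne

namespace Matrix

open LinearMap

variable {R l m n : Type*} [CommRing R] [Fintype m] [Fintype n] [DecidableEq m]

section InvertibleFactors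

variable [Fintype l] [DecidableEq l] (P : Matrix l l R) (D : Matrix l m R) (Q : Matrix m m R)
  [Invertible P] [Invertible Q]

theorem mulVecLin_comp_toLinearEquiv' :
    D.mulVecLin ∘ₗ (Q.toLinearEquiv' inferInstance : (m → R) →ₗ[R] m → R) =
      ((P.toLinearEquiv' inferInstance).symm : (l → R) →ₗ[R] l → R) ∘ₗ
        (P * D * Q).mulVecLin := by
  simp only [toLinearEquiv'_apply, toLinearEquiv'_symm_apply, toLin'_apply', ← mulVecLin_mul,
    Matrix.mul_assoc, Matrix.invOf_mul_cancel_left]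

noncomputable def rangeQuotMulEquivOfInvertible :
    ((l → R) ⧸ range (P * D * Q).mulVecLin) ≃ₗ[R] (l → R) ⧸ range D.mulVecLin :=
  rangeQuotEquivOfComm (mulVecLin_comp_toLinearEquiv' P D Q)

noncomputable def kerMulEquivOfInvertible :
    ker (P * D * Q).mulVecLin ≃ₗ[R] ker D.mulVecLin :=
  kerEquivOfComm (mulVecLin_comp_toLinearEquiv' P D Q)

end InvertibleFactors

section BlockDiagonal

variable (U : Matrix m m R) [Invertible U] (E : Matrix l n R)

theorem range_mulVecLin_fromBlocks_zero_zero :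
    range (fromBlocks U 0 0 E).mulVecLin = (range E.mulVecLin).comap (funLeft R R Sum.inr) := by
  ext v
  simp only [mem_range, Submodule.mem_comap, mulVecLin_apply, fromBlocks_mulVec]
  constructor
  · rintro ⟨x, rfl⟩
    exact ⟨x ∘ Sum.inr, by simp [funLeft]⟩
  · rintro ⟨w, hw⟩
    refine ⟨Sum.elim (⅟U *ᵥ (v ∘ Sum.inl)) w, ?_⟩
    ext (i | i) <;> simp [hw, mulVec_mulVec]

theorem ker_mulVecLin_fromBlocks_zero_zero :
    ker (fromBlocks U 0 0 E).mulVecLin = (ker E.mulVecLin).map Sum.elimZeroLeft := by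
  ext v
  simp only [mem_ker, Submodule.mem_map, mulVecLin_apply, fromBlocks_mulVec]
  constructor
  · intro hv
    have hinl : v ∘ Sum.inl = 0 := by
      have : U *ᵥ (v ∘ Sum.inl) = 0 := by simpa using congr_arg (· ∘ Sum.inl) hv
      rw [← one_mulVec (v ∘ Sum.inl), ← invOf_mul_self U, ← mulVec_mulVec, this,
        mulVec_zero]
    refine ⟨v ∘ Sum.inr, by simpa using congr_arg (· ∘ Sum.inr) hv, ?_⟩
    ext (i | i)
    · simpa using (congr_fun hinl i).symm
    · simp
  · rintro ⟨w, hw, rfl⟩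
    have : Sum.elimZeroLeft w ∘ Sum.inl = (0 : m → R) := rfl
    ext (i | i) <;> simp [this, Function.comp_def, hw]

noncomputable def rangeQuotFromBlocksZeroZeroEquiv :
    ((m ⊕ l → R) ⧸ range (fromBlocks U 0 0 E).mulVecLin) ≃ₗ[R]
      (l → R) ⧸ range E.mulVecLin :=
  Submodule.quotEquivOfEq _ _ (range_mulVecLin_fromBlocks_zero_zero U E) ≪≫ₗ
    Submodule.comapQuotEquivOfSurjective
      (funLeft_surjective_of_injective _ _ _ Sum.inr_injective) _

noncomputable def kerFromBlocksZeroZeroEquiv :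
    ker (fromBlocks U 0 0 E).mulVecLin ≃ₗ[R] ker E.mulVecLin :=
  LinearEquiv.ofEq _ _ (ker_mulVecLin_fromBlocks_zero_zero U E) ≪≫ₗ
    (Submodule.equivMapOfInjective _
      (Function.LeftInverse.injective (g := funLeft R R Sum.inr) fun _ => rfl) _).symm

end BlockDiagonal

section SchurComplement

variable [Fintype l] [DecidableEq l] [DecidableEq n]
  (A : Matrix m m R) (B : Matrix m n R) (C : Matrix l m R) (D : Matrix l n R)
  [Invertible A]

noncomputable def rangeQuotFromBlocksEquivSchur :
    ((m ⊕ l → R) ⧸ range (fromBlocks A B C D).mulVecLin) ≃ₗ[R]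
      (l → R) ⧸ range (D - C * ⅟A * B).mulVecLin :=
  letI := fromBlocksZero₁₂Invertible (1 : Matrix m m R) (C * ⅟A) (1 : Matrix l l R)
  letI := fromBlocksZero₂₁Invertible (1 : Matrix m m R) (⅟A * B) (1 : Matrix n n R)
  Submodule.quotEquivOfEq _ _ (by rw [fromBlocks_eq_of_invertible₁₁]) ≪≫ₗ
    rangeQuotMulEquivOfInvertible _ _ _ ≪≫ₗ rangeQuotFromBlocksZeroZeroEquiv A _

noncomputable def kerFromBlocksEquivSchur :
    ker (fromBlocks A B C D).mulVecLin ≃ₗ[R] ker (D - C * ⅟A * B).mulVecLin :=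
  letI := fromBlocksZero₁₂Invertible (1 : Matrix m m R) (C * ⅟A) (1 : Matrix l l R)
  letI := fromBlocksZero₂₁Invertible (1 : Matrix m m R) (⅟A * B) (1 : Matrix n n R)
  LinearEquiv.ofEq _ _ (by rw [fromBlocks_eq_of_invertible₁₁]) ≪≫ₗ
    kerMulEquivOfInvertible _ _ _ ≪≫ₗ kerFromBlocksZeroZeroEquiv A _

end SchurComplement

end Matrix

theorem stmt16_general (L l₀ : ℕ)
    (Tt S : Matrix (Fin L) (Fin L) ℤ) :
    let X : Matrix (Fin L) (Fin L) ℤ :=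
      Matrix.of fun k l => if (k : ℕ) ≤ (l : ℕ) + 1 ∧ (l : ℕ) ≤ (k : ℕ) + 1 then 1 else 0
    let Ntilde : Matrix (Fin L ⊕ Fin L) (Fin L ⊕ Fin L) ℤ :=
      Matrix.fromBlocks ((2 : ℤ) • (1 : Matrix (Fin L) (Fin L) ℤ)) (Tt + S + X)
        (1 : Matrix (Fin L) (Fin L) ℤ) ((1 : Matrix (Fin L) (Fin L) ℤ) + S + X)
    let M : Matrix (Fin L ⊕ Fin L) (Fin L ⊕ Fin L) ℤ :=
      Matrix.fromBlocks 1 S 1 1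
    let T : Matrix (Fin L) (Fin (L - l₀)) ℤ :=
      Matrix.of fun k j => Tt k (Fin.castLE (Nat.sub_le L l₀) j)
    let N : Matrix (Fin L ⊕ Fin L) (Fin L ⊕ Fin (L - l₀)) ℤ :=
      Matrix.of fun k l => Ntilde k (Sum.map id (Fin.castLE (Nat.sub_le L l₀)) l)
    let I₁ : Matrix (Fin L ⊕ Fin L) (Fin L ⊕ Fin L) ℤ := 1
    let I₀ : Matrix (Fin L ⊕ Fin L) (Fin L ⊕ Fin (L - l₀)) ℤ :=
      Matrix.of fun k l => I₁ k (Sum.map id (Fin.castLE (Nat.sub_le L l₀)) l)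
    Nonempty (((Fin L ⊕ Fin L → ℤ) ⧸ LinearMap.range (I₀ - N).mulVecLin) ≃+
        ((Fin L → ℤ) ⧸ LinearMap.range T.mulVecLin)) ∧
    Nonempty (LinearMap.ker (I₀ - N).mulVecLin ≃+ LinearMap.ker T.mulVecLin) ∧
    Nonempty (((Fin L ⊕ Fin L → ℤ) ⧸ LinearMap.range (I₁ - M).mulVecLin) ≃+
        ((Fin L → ℤ) ⧸ LinearMap.range S.mulVecLin)) ∧
    Nonempty (LinearMap.ker (I₁ - M).mulVecLin ≃+ LinearMap.ker S.mulVecLin) := by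
  intro X Ntilde M T N I₁ I₀
  let := invertibleNeg (1 : Matrix (Fin L) (Fin L) ℤ)
  set c := Fin.castLE (Nat.sub_le L l₀)
  have hN : I₀ - N = Matrix.fromBlocks (-1) (-(Tt + S + X).submatrix id c) (-1)
      (-(S + X).submatrix id c) := by
    ext (i | i) (j | j) <;>
      simp [I₀, N, Ntilde, I₁, c, Matrix.one_apply, Matrix.ofNat_apply] <;> split_ifs <;> ring
  have hSchur : T = -(S + X).submatrix id c -
      (-1) * ⅟(-1 : Matrix (Fin L) (Fin L) ℤ) * -(Tt + S + X).submatrix id c := by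
    ext i j
    simp [T, c]
  let P : Matrix (Fin L ⊕ Fin L) (Fin L ⊕ Fin L) ℤ := Matrix.fromBlocks 0 (-1) 1 0
  let : Invertible P :=
    invertibleOfLeftInverse _ (Matrix.fromBlocks 0 1 (-1) 0)
      (by simp [P, Matrix.fromBlocks_multiply])
  have hM : I₁ - M = P * Matrix.fromBlocks (-1) 0 0 S * 1 := by
    ext (i | i) (j | j) <;> simp [I₁, M, P, Matrix.fromBlocks_multiply, Matrix.one_apply]
  rw [hN, hSchur, hM]
  exact ⟨⟨(Matrix.rangeQuotFromBlocksEquivSchur _ _ _ _).toAddEquiv⟩,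
    ⟨(Matrix.kerFromBlocksEquivSchur _ _ _ _).toAddEquiv⟩,
    ⟨(Matrix.rangeQuotMulEquivOfInvertible _ _ _ ≪≫ₗ
      Matrix.rangeQuotFromBlocksZeroZeroEquiv _ _).toAddEquiv⟩,
    ⟨(Matrix.kerMulEquivOfInvertible _ _ _ ≪≫ₗ
      Matrix.kerFromBlocksZeroZeroEquiv _ _).toAddEquiv⟩⟩

/-- Block matrix computation: with `T̃, S ∈ M_L(ℕ)`, `X` tridiagonal 0–1,
`Ñ = [[2I, T̃+S+X],[I, I+S+X]]`, `M = [[I,S],[I,I]]`, `T` the first `L−l₀` columns of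
`T̃`, `N`, `I₀` the corresponding column-restrictions of `Ñ` and of the identity `I₁`,
one has `coker(I₀−N) ≅ coker T`, `ker(I₀−N) ≅ ker T`, `coker(I₁−M) ≅ coker S`, and
`ker(I₁−M) ≅ ker S`. -/
theorem stmt16 (L l₀ : ℕ) (hL : 1 ≤ L) (hl₀ : l₀ ≤ L)
    (Tt S : Matrix (Fin L) (Fin L) ℤ)
    (hTt : ∀ i j, 0 ≤ Tt i j) (hS : ∀ i j, 0 ≤ S i j) :
    let X : Matrix (Fin L) (Fin L) ℤ :=
      Matrix.of fun k l => if (k : ℕ) ≤ (l : ℕ) + 1 ∧ (l : ℕ) ≤ (k : ℕ) + 1 then 1 else 0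
    let Ntilde : Matrix (Fin L ⊕ Fin L) (Fin L ⊕ Fin L) ℤ :=
      Matrix.fromBlocks ((2 : ℤ) • (1 : Matrix (Fin L) (Fin L) ℤ)) (Tt + S + X)
        (1 : Matrix (Fin L) (Fin L) ℤ) ((1 : Matrix (Fin L) (Fin L) ℤ) + S + X)
    let M : Matrix (Fin L ⊕ Fin L) (Fin L ⊕ Fin L) ℤ :=
      Matrix.fromBlocks 1 S 1 1
    let T : Matrix (Fin L) (Fin (L - l₀)) ℤ :=
      Matrix.of fun k j => Tt k (Fin.castLE (Nat.sub_le L l₀) j)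
    let N : Matrix (Fin L ⊕ Fin L) (Fin L ⊕ Fin (L - l₀)) ℤ :=
      Matrix.of fun k l => Ntilde k (Sum.map id (Fin.castLE (Nat.sub_le L l₀)) l)
    let I₁ : Matrix (Fin L ⊕ Fin L) (Fin L ⊕ Fin L) ℤ := 1
    let I₀ : Matrix (Fin L ⊕ Fin L) (Fin L ⊕ Fin (L - l₀)) ℤ :=
      Matrix.of fun k l => I₁ k (Sum.map id (Fin.castLE (Nat.sub_le L l₀)) l)
    Nonempty (((Fin L ⊕ Fin L → ℤ) ⧸ LinearMap.range (I₀ - N).mulVecLin) ≃+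
        ((Fin L → ℤ) ⧸ LinearMap.range T.mulVecLin)) ∧
    Nonempty (LinearMap.ker (I₀ - N).mulVecLin ≃+ LinearMap.ker T.mulVecLin) ∧
    Nonempty (((Fin L ⊕ Fin L → ℤ) ⧸ LinearMap.range (I₁ - M).mulVecLin) ≃+
        ((Fin L → ℤ) ⧸ LinearMap.range S.mulVecLin)) ∧
    Nonempty (LinearMap.ker (I₁ - M).mulVecLin ≃+ LinearMap.ker S.mulVecLin) :=
  stmt16_general L l₀ Tt S
end
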